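/- arXiv:1701.01070 — 11 statements merged into one kernel-verified Lean document; each statement's English description precedes it below -/
import Mathlib

section
/- Let A be a self-adjoint continuous linear operator on a complex Hilbert space X with operator norm ‖A‖ ≤ 1, and suppose x, y ∈ X satisfy (I − A²)y = x. Then the partial sums ∑_{k=0}^{n} A^{2k} x converge in norm as n → ∞ to an element y* ∈ X that satisfies (I − A²)y* = x and is the minimal-norm solution: ‖y*‖ ≤ ‖z‖ for every z ∈ X with (I − A²)z = x. -/
open Filter
open scoped InnerProductSpace

/-- Let `A` be a self-adjoint continuous linear operator on a complex
Hilbert space `X` with `‖A‖ ≤ 1`, and suppose `x, y ∈ X` satisfy `(I − A²) y = x`.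
Then the partial sums `∑_{k=0}^{n} A^(2k) x` converge in norm to some `y*` satisfying
`(I − A²) y* = x` which has minimal norm among all solutions. -/
theorem stmt0 {X : Type*} [NormedAddCommGroup X] [InnerProductSpace ℂ X] [CompleteSpace X]
    (A : X →L[ℂ] X) (hA : IsSelfAdjoint A) (hAnorm : ‖A‖ ≤ 1)
    (x y : X) (hy : ((1 : X →L[ℂ] X) - A ^ 2) y = x) :
    ∃ ystar : X,
      Tendsto (fun n : ℕ => ∑ k ∈ Finset.range (n + 1), (A ^ (2 * k)) x)
        atTop (nhds ystar) ∧
      ((1 : X →L[ℂ] X) - A ^ 2) ystar = x ∧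
      ∀ z : X, ((1 : X →L[ℂ] X) - A ^ 2) z = x → ‖ystar‖ ≤ ‖z‖ := by
  -- apply powers across addition of exponents
  have happ : ∀ (a b : ℕ) (u : X), (A ^ (a + b)) u = (A ^ a) ((A ^ b) u) := by
    intro a b u
    rw [pow_add]
    rfl
  -- move powers of A across the inner product
  have hmove : ∀ (k : ℕ) (u v : X), ⟪(A ^ k) u, v⟫_ℂ = ⟪u, (A ^ k) v⟫_ℂ := by
    intro k u v
    have h := (hA.pow k).adjoint_eq
    nth_rewrite 1 [← h]
    exact ContinuousLinearMap.adjoint_inner_left (A ^ k) v u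
  -- the sequence b n = ‖A^n y‖² is antitone
  set b : ℕ → ℝ := fun n => ‖(A ^ n) y‖ ^ 2 with hb_def
  have hAle : ∀ (u : X), ‖A u‖ ≤ ‖u‖ := fun u => by
    calc ‖A u‖ ≤ ‖A‖ * ‖u‖ := A.le_opNorm u
    _ ≤ 1 * ‖u‖ := by gcongr
    _ = ‖u‖ := one_mul _
  have hb_succ : ∀ n, b (n + 1) ≤ b n := by
    intro n
    have h1 : (A ^ (n + 1)) y = A ((A ^ n) y) := by
      rw [show n + 1 = 1 + n from by omega, happ, pow_one]
    have : ‖(A ^ (n + 1)) y‖ ≤ ‖(A ^ n) y‖ := by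
      rw [h1]; exact hAle _
    exact pow_le_pow_left₀ (norm_nonneg _) this 2
  have hb_anti : Antitone b := antitone_nat_of_succ_le hb_succ
  have hb_bdd : BddBelow (Set.range b) := ⟨0, by rintro _ ⟨n, rfl⟩; positivity⟩
  set L : ℝ := ⨅ n, b n with hL_def
  have hb_lim : Tendsto b atTop (nhds L) := tendsto_atTop_ciInf hb_anti hb_bdd
  have hLle : ∀ n, L ≤ b n := fun n => ciInf_le hb_bdd n
  -- inner products between iterates
  have hinner : ∀ n m : ℕ, ⟪(A ^ (2 * n)) y, (A ^ (2 * m)) y⟫_ℂ = (b (n + m) : ℂ) := by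
    intro n m
    rw [hmove]
    have h1 : (A ^ (2 * n)) ((A ^ (2 * m)) y) = (A ^ (n + m)) ((A ^ (n + m)) y) := by
      rw [← happ, ← happ]
      have h2 : 2 * n + 2 * m = (n + m) + (n + m) := by omega
      rw [h2]
    rw [h1, ← hmove, hb_def]
    simp [inner_self_eq_norm_sq_to_K]
  -- the sequence A^{2n} y is Cauchy
  have hcauchy : CauchySeq (fun n : ℕ => (A ^ (2 * n)) y) := by
    rw [Metric.cauchySeq_iff]
    intro ε hε
    have hε2 : (0:ℝ) < ε ^ 2 / 2 := by positivity
    obtain ⟨N, hN⟩ := (Metric.tendsto_atTop.mp hb_lim) (ε ^ 2 / 2) hε2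
    refine ⟨N, fun n hn m hm => ?_⟩
    have key : ‖(A ^ (2 * n)) y - (A ^ (2 * m)) y‖ ^ 2
        = b (n + n) - 2 * b (n + m) + b (m + m) := by
      have hns := @norm_sub_sq ℂ _ _ _ _ ((A ^ (2 * n)) y) ((A ^ (2 * m)) y)
      rw [hns, hinner n m]
      have h1 : ‖(A ^ (2 * n)) y‖ ^ 2 = b (n + n) := by
        simp only [hb_def]; rw [show n + n = 2 * n from by ring]
      have h2 : ‖(A ^ (2 * m)) y‖ ^ 2 = b (m + m) := by
        simp only [hb_def]; rw [show m + m = 2 * m from by ring]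
      rw [h1, h2]
      norm_num
    have hbound : b (n + n) - 2 * b (n + m) + b (m + m) < ε ^ 2 := by
      have e1 : b (n + n) - L < ε ^ 2 / 2 := by
        have h := hN (n + n) (le_trans hn (Nat.le_add_right n n))
        rw [Real.dist_eq, abs_lt] at h
        linarith [h.2]
      have e2 : b (m + m) - L < ε ^ 2 / 2 := by
        have h := hN (m + m) (le_trans hm (Nat.le_add_right m m))
        rw [Real.dist_eq, abs_lt] at h
        linarith [h.2]
      have e3 : L ≤ b (n + m) := hLle _
      linarith
    rw [dist_eq_norm]
    have hnn : (0:ℝ) ≤ ‖(A ^ (2 * n)) y - (A ^ (2 * m)) y‖ := norm_nonneg _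
    nlinarith [key, hbound]
  obtain ⟨p, hp⟩ := cauchySeq_tendsto_of_complete hcauchy
  -- shifted sequence also tends to p
  have hshift : Tendsto (fun n : ℕ => (A ^ (2 * (n + 1))) y) atTop (nhds p) :=
    hp.comp (tendsto_add_atTop_nat 1)
  -- p is a fixed point of A²
  have hfix : (A ^ 2) p = p := by
    have h1 : Tendsto (fun n : ℕ => (A ^ 2) ((A ^ (2 * n)) y)) atTop (nhds ((A ^ 2) p)) :=
      ((A ^ 2).continuous.tendsto p).comp hp
    have h2 : (fun n : ℕ => (A ^ 2) ((A ^ (2 * n)) y))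
        = fun n : ℕ => (A ^ (2 * (n + 1))) y := by
      funext n
      rw [show 2 * (n + 1) = 2 + 2 * n from by ring, happ]
    rw [h2] at h1
    exact tendsto_nhds_unique h1 hshift
  -- y - p is a solution
  have hstar : ((1 : X →L[ℂ] X) - A ^ 2) (y - p) = x := by
    simp only [ContinuousLinearMap.sub_apply, ContinuousLinearMap.one_apply, map_sub] at hy ⊢
    rw [hfix, ← hy]
    abel
  refine ⟨y - p, ?_, hstar, ?_⟩
  · -- convergence of partial sums
    have hsum : ∀ n : ℕ, ∑ k ∈ Finset.range (n + 1), (A ^ (2 * k)) x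
        = y - (A ^ (2 * (n + 1))) y := by
      intro n
      have hterm : ∀ k : ℕ, (A ^ (2 * k)) x = (A ^ (2 * k)) y - (A ^ (2 * (k + 1))) y := by
        intro k
        rw [← hy]
        simp only [ContinuousLinearMap.sub_apply, ContinuousLinearMap.one_apply, map_sub]
        congr 1
      calc ∑ k ∈ Finset.range (n + 1), (A ^ (2 * k)) x
          = ∑ k ∈ Finset.range (n + 1), ((fun k => (A ^ (2 * k)) y) k
              - (fun k => (A ^ (2 * k)) y) (k + 1)) :=
            Finset.sum_congr rfl fun k _ => hterm k
        _ = (A ^ (2 * 0)) y - (A ^ (2 * (n + 1))) y := Finset.sum_range_sub' _ _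
        _ = y - (A ^ (2 * (n + 1))) y := by norm_num
    have h : Tendsto (fun n : ℕ => y - (A ^ (2 * (n + 1))) y) atTop (nhds (y - p)) :=
      tendsto_const_nhds.sub hshift
    exact h.congr fun n => (hsum n).symm
  · -- minimality
    intro z hz
    set w : X := z - (y - p) with hw_def
    have hwfix : (A ^ 2) w = w := by
      have h1 : ((1 : X →L[ℂ] X) - A ^ 2) w = 0 := by
        rw [hw_def, map_sub, hz, hstar, sub_self]
      simp only [ContinuousLinearMap.sub_apply, ContinuousLinearMap.one_apply,
        sub_eq_zero] at h1
      exact h1.symm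
    have hwpow : ∀ n : ℕ, (A ^ (2 * n)) w = w := by
      intro n
      induction n with
      | zero => simp
      | succ k ih =>
        rw [show 2 * (k + 1) = 2 * k + 2 from by ring, happ, hwfix, ih]
    -- ⟪y - p, w⟫ = 0
    have horth : ⟪y - p, w⟫_ℂ = 0 := by
      have h1 : Tendsto (fun n : ℕ => ⟪(A ^ (2 * n)) y, w⟫_ℂ) atTop (nhds ⟪p, w⟫_ℂ) :=
        Tendsto.inner hp tendsto_const_nhds
      have h2 : (fun n : ℕ => ⟪(A ^ (2 * n)) y, w⟫_ℂ) = fun _ : ℕ => ⟪y, w⟫_ℂ := by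
        funext n
        rw [hmove, hwpow]
      rw [h2] at h1
      have h3 : ⟪p, w⟫_ℂ = ⟪y, w⟫_ℂ := (tendsto_nhds_unique tendsto_const_nhds h1).symm
      rw [inner_sub_left, h3, sub_self]
    have hz_eq : z = (y - p) + w := by rw [hw_def]; abel
    have hnorm : ‖z‖ ^ 2 = ‖y - p‖ ^ 2 + ‖w‖ ^ 2 := by
      rw [hz_eq, @norm_add_sq ℂ, horth]
      norm_num
    nlinarith [norm_nonneg (y - p), norm_nonneg z, norm_nonneg w, sq_nonneg ‖w‖]
end

section
/- Suppose h₀ ∈ H and there exists k ∈ H with (I − P∘R∘P∘R)k = h₀. Then the partial sums ∑_{i=0}^{n} (P∘R∘P∘R)^i h₀ of the scattering control Neumann series converge in H as n → ∞. -/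
/-!
Put `T = P R P`: it is self-adjoint with `‖T‖ ≤ 1`, and `(P R P R)^(n+1) = T T^(2n) P R` because
`P` is idempotent. The partial sums telescope to `k - (P R P R)^(n+1) k`, so it suffices that
`T^(2n) y` converges. Since `j ↦ ‖T^j y‖` decreases to some `L`, and self-adjointness gives
`‖T^(2m) y - T^(2n) y‖² = ‖T^(2m) y‖² + ‖T^(2n) y‖² - 2 ‖T^(m+n) y‖² → L² + L² - 2 L² = 0`,
that sequence is Cauchy.
-/

open Filter Topology
open scoped InnerProductSpace

theorem IsIdempotentElem.mul_pow_mul_eq {M : Type*} [Monoid M] {p : M} (hp : IsIdempotentElem p)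
    (r : M) (n : ℕ) : (p * r) ^ n * p = (p * r * p) ^ n * p := by
  rw [mul_pow_mul, mul_assoc p r p, mul_pow_mul, mul_assoc r, hp.eq]

theorem IsSelfAdjoint.norm_le_one_of_mul_self_eq_one {E : Type*} [NormedRing E] [StarRing E]
    [CStarRing E] {x : E} (hx : IsSelfAdjoint x) (hx2 : x * x = 1) : ‖x‖ ≤ 1 := by
  rcases subsingleton_or_nontrivial E with _ | _
  · simp [Subsingleton.elim x 0]
  · have hu : x ∈ unitary E := by simp [Unitary.mem_iff, hx.star_eq, hx2]
    exact (CStarRing.norm_of_mem_unitary hu).le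

theorem ContinuousLinearMap.sum_range_pow_apply_one_sub_apply {R M : Type*} [Ring R]
    [TopologicalSpace M] [AddCommGroup M] [Module R M] [IsTopologicalAddGroup M]
    (A : M →L[R] M) (k : M) (n : ℕ) :
    ∑ i ∈ Finset.range n, (A ^ i) ((1 - A) k) = k - (A ^ n) k := by
  simpa using congr($(geom_sum_mul_neg A n) k)

namespace IsSelfAdjoint

variable {𝕜 E : Type*} [RCLike 𝕜] [NormedAddCommGroup E] [InnerProductSpace 𝕜 E] [CompleteSpace E]
  {T : E →L[𝕜] E}

theorem inner_pow_apply_pow_apply (hT : IsSelfAdjoint T) (m n : ℕ) (x y : E) :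
    ⟪(T ^ m) x, (T ^ n) y⟫_𝕜 = ⟪(T ^ (n + m)) x, y⟫_𝕜 := by
  rw [← (hT.pow n).adjoint_eq, ContinuousLinearMap.adjoint_inner_right, pow_add,
    ContinuousLinearMap.mul_def]
  rfl

theorem norm_sub_sq_pow_two_mul_apply (hT : IsSelfAdjoint T) (m n : ℕ) (y : E) :
    ‖(T ^ (2 * m)) y - (T ^ (2 * n)) y‖ ^ 2 =
      ‖(T ^ (2 * m)) y‖ ^ 2 + ‖(T ^ (2 * n)) y‖ ^ 2 - 2 * ‖(T ^ (m + n)) y‖ ^ 2 := by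
  have hcross : RCLike.re ⟪(T ^ (2 * m)) y, (T ^ (2 * n)) y⟫_𝕜 = ‖(T ^ (m + n)) y‖ ^ 2 := by
    rw [← inner_self_eq_norm_sq (𝕜 := 𝕜), hT.inner_pow_apply_pow_apply,
      hT.inner_pow_apply_pow_apply, ← two_mul, add_comm, ← mul_add]
  rw [norm_sub_sq (𝕜 := 𝕜), hcross]
  ring

theorem cauchySeq_pow_two_mul_apply (hT : IsSelfAdjoint T) (hT1 : ‖T‖ ≤ 1) (y : E) :
    CauchySeq fun n ↦ (T ^ (2 * n)) y := by
  set a : ℕ → ℝ := fun j ↦ ‖(T ^ j) y‖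
  have ha : Antitone a := antitone_nat_of_succ_le fun j ↦ by
    calc ‖(T ^ (j + 1)) y‖ = ‖T ((T ^ j) y)‖ := by rw [pow_succ']; rfl
      _ ≤ ‖(T ^ j) y‖ := by simpa using T.le_of_opNorm_le hT1 ((T ^ j) y)
  have hbdd : BddBelow (Set.range a) := ⟨0, by rintro _ ⟨j, rfl⟩; exact norm_nonneg _⟩
  obtain ⟨L, hL⟩ : ∃ L, Tendsto a atTop (𝓝 L) := ⟨_, tendsto_atTop_ciInf ha hbdd⟩
  have hfst : Tendsto (fun p : ℕ × ℕ ↦ 2 * p.1) atTop atTop :=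
    tendsto_atTop_atTop.2 fun b ↦ ⟨(b, b), fun p hp ↦ by have := hp.1; omega⟩
  have hsnd : Tendsto (fun p : ℕ × ℕ ↦ 2 * p.2) atTop atTop :=
    tendsto_atTop_atTop.2 fun b ↦ ⟨(b, b), fun p hp ↦ by have := hp.2; omega⟩
  have hsum : Tendsto (fun p : ℕ × ℕ ↦ p.1 + p.2) atTop atTop :=
    tendsto_atTop_atTop.2 fun b ↦ ⟨(b, b), fun p hp ↦ by have := hp.1; omega⟩
  have hsq : Tendsto (fun p : ℕ × ℕ ↦ dist ((T ^ (2 * p.1)) y) ((T ^ (2 * p.2)) y) ^ 2)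
      atTop (𝓝 0) := by
    simp_rw [dist_eq_norm, hT.norm_sub_sq_pow_two_mul_apply]
    convert ((hL.comp hfst).pow 2).add ((hL.comp hsnd).pow 2) |>.sub
      (((hL.comp hsum).pow 2).const_mul 2) using 1
    · rfl
    · congr 1; ring
  rw [cauchySeq_iff_tendsto_dist_atTop_0]
  simpa only [Function.comp_def, Real.sqrt_sq dist_nonneg, Real.sqrt_zero] using
    (Real.continuous_sqrt.tendsto 0).comp hsq

end IsSelfAdjoint

/-- If the scattering control equation `(I − P∘R∘P∘R) k = h₀` has a
solution `k ∈ H`, then the partial sums of the scattering control Neumann series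
`∑_{i=0}^{n} (P∘R∘P∘R)^i h₀` converge in `H`. -/
theorem stmt1 {H : Type*} [NormedAddCommGroup H] [InnerProductSpace ℂ H] [CompleteSpace H]
    (R P : H →L[ℂ] H)
    (hR : IsSelfAdjoint R) (hR2 : R ∘L R = 1)
    (hP : IsSelfAdjoint P) (hP2 : P ∘L P = P)
    (h₀ k : H) (hk : ((1 : H →L[ℂ] H) - P ∘L R ∘L P ∘L R) k = h₀) :
    ∃ l : H,
      Tendsto (fun n : ℕ => ∑ i ∈ Finset.range (n + 1), ((P ∘L R ∘L P ∘L R) ^ i) h₀)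
        atTop (nhds l) := by
  set T := P * R * P
  have hT : IsSelfAdjoint T := hR.conjugate_self hP
  have hT1 : ‖T‖ ≤ 1 := by
    have hP1 : ‖P‖ ≤ 1 := IsStarProjection.norm_le P ⟨hP2, hP⟩
    have hR1 : ‖R‖ ≤ 1 := hR.norm_le_one_of_mul_self_eq_one hR2
    calc ‖T‖ ≤ ‖P‖ * ‖R‖ * ‖P‖ := norm_mul₃_le
      _ ≤ 1 * 1 * 1 := by gcongr
      _ = 1 := by norm_num
  have hpow (n : ℕ) : (P ∘L R ∘L P ∘L R) ^ (n + 1) = T * T ^ (2 * n) * (P * R) := by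
    have hA : P ∘L R ∘L P ∘L R = (P * R) ^ 2 := by rw [sq, mul_assoc]; rfl
    rw [hA, ← pow_mul, show 2 * (n + 1) = 2 * n + 1 + 1 by ring, pow_succ, ← mul_assoc,
      IsIdempotentElem.mul_pow_mul_eq hP2, pow_succ', mul_assoc]
  obtain ⟨l, hl⟩ := cauchySeq_tendsto_of_complete (hT.cauchySeq_pow_two_mul_apply hT1 (P (R k)))
  refine ⟨k - T l, ?_⟩
  simp_rw [← hk, ContinuousLinearMap.sum_range_pow_apply_one_sub_apply, hpow]
  exact tendsto_const_nhds.sub ((T.continuous.tendsto l).comp hl)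
end

section
/- For every g ∈ H one has g = P(R(P(R g))) if and only if P g = g and P(R g) = R g. In other words, the kernel of I − P∘R∘P∘R consists exactly of those g lying in the range of P whose image R g also lies in the range of P. -/
open ContinuousLinearMap

local notation "⟪" x ", " y "⟫" => @inner ℂ _ _ x y

private lemma proj_norm_eq {H : Type*} [NormedAddCommGroup H] [InnerProductSpace ℂ H]
    [CompleteSpace H] {P : H →L[ℂ] H} (hP : IsSelfAdjoint P) (hP2 : P ∘L P = P)
    {v : H} (h : ‖v‖ ≤ ‖P v‖) : P v = v := by
  have hadj : adjoint P = P := hP.adjoint_eq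
  have hPPv : P (P v) = P v := by
    have := congrArg (fun T : H →L[ℂ] H => T v) hP2
    simpa using this
  have h1 : ⟪P v, P v⟫ = ⟪v, P v⟫ := by
    have := adjoint_inner_left P (P v) v
    rw [hadj, hPPv] at this
    exact this
  have h3 : ⟪P v, v⟫ = ⟪v, P v⟫ := by
    have := adjoint_inner_left P v v
    rw [hadj] at this
    exact this
  have h2 : ⟪v - P v, v - P v⟫ = ⟪v, v⟫ - ⟪v, P v⟫ := by
    rw [inner_sub_sub_self, h1, h3]; ring
  have hnorm : ‖v - P v‖ ^ 2 = ‖v‖ ^ 2 - ‖P v‖ ^ 2 := by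
    have e1 : ⟪v - P v, v - P v⟫ = ((‖v - P v‖ : ℂ)) ^ 2 := inner_self_eq_norm_sq_to_K _
    have e2 : ⟪v, v⟫ = ((‖v‖ : ℂ)) ^ 2 := inner_self_eq_norm_sq_to_K _
    have e3 : ⟪v, P v⟫ = ((‖P v‖ : ℂ)) ^ 2 := by
      rw [← h1]; exact inner_self_eq_norm_sq_to_K _
    have : ((‖v - P v‖ : ℂ)) ^ 2 = ((‖v‖ : ℂ)) ^ 2 - ((‖P v‖ : ℂ)) ^ 2 := by
      rw [← e1, ← e2, ← e3, h2]
    exact_mod_cast this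
  have hle : ‖P v‖ ≤ ‖v‖ := by
    nlinarith [sq_nonneg ‖v - P v‖, norm_nonneg v, norm_nonneg (P v)]
  have heq : ‖P v‖ = ‖v‖ := le_antisymm hle h
  have hz : ‖v - P v‖ ^ 2 = 0 := by rw [hnorm, heq]; ring
  have hz0 : ‖v - P v‖ = 0 := by nlinarith [norm_nonneg (v - P v)]
  have := norm_eq_zero.mp hz0
  exact (sub_eq_zero.mp this).symm

private lemma R_norm {H : Type*} [NormedAddCommGroup H] [InnerProductSpace ℂ H]
    [CompleteSpace H] {R : H →L[ℂ] H} (hR : IsSelfAdjoint R) (hR2 : R ∘L R = 1)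
    (x : H) : ‖R x‖ = ‖x‖ := by
  have hadj : adjoint R = R := hR.adjoint_eq
  have hRR : R (R x) = x := by
    have := congrArg (fun T : H →L[ℂ] H => T x) hR2
    simpa using this
  have h1 : ⟪R x, R x⟫ = ⟪x, x⟫ := by
    have := adjoint_inner_left R (R x) x
    rw [hadj, hRR] at this
    exact this
  have e1 : ⟪R x, R x⟫ = ((‖R x‖ : ℂ)) ^ 2 := inner_self_eq_norm_sq_to_K _
  have e2 : ⟪x, x⟫ = ((‖x‖ : ℂ)) ^ 2 := inner_self_eq_norm_sq_to_K _
  have h2 : ‖R x‖ ^ 2 = ‖x‖ ^ 2 := by exact_mod_cast e1.symm.trans (h1.trans e2)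
  nlinarith [norm_nonneg (R x), norm_nonneg x]

/-- For every `g ∈ H`, `g = P(R(P(R g)))` iff `P g = g` and
`P (R g) = R g`: the kernel of `I − P∘R∘P∘R` consists exactly of those `g` in the
range of `P` whose image `R g` also lies in the range of `P`. -/
theorem stmt2 {H : Type*} [NormedAddCommGroup H] [InnerProductSpace ℂ H] [CompleteSpace H]
    (R P : H →L[ℂ] H)
    (hR : IsSelfAdjoint R) (hR2 : R ∘L R = 1)
    (hP : IsSelfAdjoint P) (hP2 : P ∘L P = P) :
    ∀ g : H, g = P (R (P (R g))) ↔ (P g = g ∧ P (R g) = R g) := by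
  intro g
  have hRR : ∀ x, R (R x) = x := fun x => by
    have := congrArg (fun T : H →L[ℂ] H => T x) hR2
    simpa using this
  constructor
  · intro hg
    -- ‖g‖ ≤ ‖P (R g)‖
    have hPle : ∀ x, ‖P x‖ ≤ ‖x‖ := by
      intro x
      by_contra hc
      push_neg at hc
      have := proj_norm_eq hP hP2 (le_of_lt hc)
      rw [this] at hc
      exact lt_irrefl _ hc
    have c1 : ‖g‖ ≤ ‖R (P (R g))‖ := by
      calc ‖g‖ = ‖P (R (P (R g)))‖ := by rw [← hg]
        _ ≤ ‖R (P (R g))‖ := hPle _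
    have c2 : ‖R (P (R g))‖ = ‖P (R g)‖ := R_norm hR hR2 _
    have c3 : ‖R g‖ = ‖g‖ := R_norm hR hR2 _
    have : ‖R g‖ ≤ ‖P (R g)‖ := by
      rw [c3]; calc ‖g‖ ≤ ‖R (P (R g))‖ := c1
        _ = ‖P (R g)‖ := c2
    have hPRg : P (R g) = R g := proj_norm_eq hP hP2 this
    have hPg : P g = g := by
      rw [hPRg, hRR] at hg
      exact hg.symm
    exact ⟨hPg, hPRg⟩
  · rintro ⟨h1, h2⟩
    rw [h2, hRR, h1]
end

section
/- Define N := P∘R∘P + Q∘R∘Q and Z := P∘R∘Q + Q∘R∘P. Then N and Z are self-adjoint, N∘N + Z∘Z = I, N∘Z + Z∘N = 0, and N commutes with P. -/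
/-- With `N := P∘R∘P + Q∘R∘Q` and `Z := P∘R∘Q + Q∘R∘P` (`Q = I − P`),
the operators `N` and `Z` are self-adjoint, `N∘N + Z∘Z = I`, `N∘Z + Z∘N = 0`, and
`N` commutes with `P`. -/
theorem stmt5 {H : Type*} [NormedAddCommGroup H] [InnerProductSpace ℂ H] [CompleteSpace H]
    (R P : H →L[ℂ] H)
    (hR : IsSelfAdjoint R) (hR2 : R ∘L R = 1)
    (hP : IsSelfAdjoint P) (hP2 : P ∘L P = P)
    (N Z : H →L[ℂ] H)
    (hN : N = P ∘L R ∘L P + ((1 : H →L[ℂ] H) - P) ∘L R ∘L ((1 : H →L[ℂ] H) - P))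
    (hZ : Z = P ∘L R ∘L ((1 : H →L[ℂ] H) - P) + ((1 : H →L[ℂ] H) - P) ∘L R ∘L P) :
    IsSelfAdjoint N ∧ IsSelfAdjoint Z ∧
      N ∘L N + Z ∘L Z = 1 ∧ N ∘L Z + Z ∘L N = 0 ∧ N ∘L P = P ∘L N := by
  simp only [← ContinuousLinearMap.mul_def] at *
  subst hN hZ
  have hPa : ∀ x : H →L[ℂ] H, P * (P * x) = P * x := by
    intro x; rw [← mul_assoc, hP2]
  have hRa : ∀ x : H →L[ℂ] H, R * (R * x) = x := by
    intro x; rw [← mul_assoc, hR2, one_mul]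
  refine ⟨?_, ?_, ?_, ?_, ?_⟩
  · simp only [IsSelfAdjoint, star_add, star_mul, star_sub, star_one, hP.star_eq, hR.star_eq]
    noncomm_ring
  · simp only [IsSelfAdjoint, star_add, star_mul, star_sub, star_one, hP.star_eq, hR.star_eq]
    noncomm_ring
  · simp only [mul_sub, sub_mul, mul_add, add_mul, mul_one, one_mul, mul_assoc, hPa, hRa, hP2,
      hR2]
    abel
  · simp only [mul_sub, sub_mul, mul_add, add_mul, mul_one, one_mul, mul_assoc, hPa, hRa, hP2,
      hR2]
    abel
  · simp only [mul_sub, sub_mul, mul_add, add_mul, mul_one, one_mul, mul_assoc, hPa, hRa, hP2,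
      hR2]
    abel
end

section
/- Let h₀ ∈ H with P h₀ = 0, and let h_k := ∑_{i=0}^{k} (P∘R∘P∘R)^i h₀ be the partial sums of the scattering control Neumann series. With N := P∘R∘P + Q∘R∘Q, the interior part of the propagated partial sums satisfies Q(R h_k) = N^{2k+1} h₀ for every k ≥ 0. -/
/-- For `h₀` with `P h₀ = 0` and `h_k := ∑_{i=0}^{k} (P∘R∘P∘R)^i h₀`,
with `N := P∘R∘P + Q∘R∘Q` (`Q = I − P`), the interior part of the propagated partial
sums satisfies `Q (R h_k) = N^(2k+1) h₀` for every `k ≥ 0`. -/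
theorem stmt8 {H : Type*} [NormedAddCommGroup H] [InnerProductSpace ℂ H] [CompleteSpace H]
    (R P : H →L[ℂ] H)
    (hR : IsSelfAdjoint R) (hR2 : R ∘L R = 1)
    (hP : IsSelfAdjoint P) (hP2 : P ∘L P = P)
    (N : H →L[ℂ] H)
    (hN : N = P ∘L R ∘L P + ((1 : H →L[ℂ] H) - P) ∘L R ∘L ((1 : H →L[ℂ] H) - P))
    (h₀ : H) (hh₀ : P h₀ = 0) :
    ∀ k : ℕ,
      ((1 : H →L[ℂ] H) - P) (R (∑ i ∈ Finset.range (k + 1), ((P ∘L R ∘L P ∘L R) ^ i) h₀))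
        = (N ^ (2 * k + 1)) h₀ := by
  have hRR : ∀ x, R (R x) = x := by
    intro x
    have := congrArg (fun (T : H →L[ℂ] H) => T x) hR2
    simpa using this
  have hPP : ∀ x, P (P x) = P x := by
    intro x
    have := congrArg (fun (T : H →L[ℂ] H) => T x) hP2
    simpa using this
  set Q : H →L[ℂ] H := (1 : H →L[ℂ] H) - P with hQdef
  set A : H →L[ℂ] H := P ∘L R ∘L P ∘L R with hAdef
  set s : ℕ → H := fun k => ∑ i ∈ Finset.range (k + 1), (A ^ i) h₀ with hsdef
  have hs0 : s 0 = h₀ := by simp [hsdef]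
  have hsucc : ∀ k, s (k + 1) = h₀ + A (s k) := by
    intro k
    have h1 : s (k + 1) = (∑ i ∈ Finset.range (k + 1), (A ^ (i + 1)) h₀) + (A ^ 0) h₀ :=
      Finset.sum_range_succ' _ _
    rw [h1]
    simp only [pow_succ', ContinuousLinearMap.mul_apply, pow_zero,
      ContinuousLinearMap.one_apply, ← map_sum]
    rw [add_comm]
  have hQapp : ∀ x, Q x = x - P x := by
    intro x; simp [hQdef]
  have hPA : ∀ x, P (A x) = A x := by
    intro x
    simp [hAdef, ContinuousLinearMap.comp_apply, hPP]
  have hQP : ∀ x, Q (P x) = 0 := by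
    intro x; rw [hQapp, hPP, sub_self]
  have hQQ : ∀ x, Q (Q x) = Q x := by
    intro x
    rw [hQapp (Q x), hQapp x, map_sub, hPP, sub_self, sub_zero]
  have hNapp : ∀ x, N x = P (R (P x)) + Q (R (Q x)) := by
    intro x
    rw [hN]
    simp [ContinuousLinearMap.add_apply, ContinuousLinearMap.comp_apply]
  have hNQ : ∀ y, N (Q y) = Q (R (Q y)) := by
    intro y
    rw [hNapp]
    have hz : P (Q y) = 0 := by
      rw [hQapp, map_sub, hPP, sub_self]
    rw [hz, hQQ]
    simp
  have hPs : ∀ k, P (s k) = s k - h₀ := by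
    intro k
    induction k with
    | zero => simp [hs0, hh₀]
    | succ k ih =>
      rw [hsucc k, map_add, hh₀, hPA]
      abel
  have hAs : ∀ x, P (R (P (R x))) = A x := by
    intro x
    simp [hAdef, ContinuousLinearMap.comp_apply]
  have main : ∀ k, Q (R (s k)) = (N ^ (2 * k + 1)) h₀ := by
    intro k
    induction k with
    | zero =>
      have hQh : Q h₀ = h₀ := by rw [hQapp, hh₀, sub_zero]
      rw [hs0, pow_one, hNapp, hh₀, hQh]
      simp
    | succ k ih =>
      have h2 : 2 * (k + 1) + 1 = (2 * k + 1) + 1 + 1 := by ring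
      rw [h2, pow_succ', pow_succ', ContinuousLinearMap.mul_apply,
        ContinuousLinearMap.mul_apply, ← ih, hNQ, hNQ]
      have e1 : Q (R (Q (R (s k)))) = s (k + 1) - R (P (R (s k))) := by
        rw [hQapp (R (s k)), map_sub R, hRR, hQapp, map_sub P, hPs, hAs, hsucc]
        abel
      rw [e1, map_sub R, hRR, map_sub Q, hQP, sub_zero]
  intro k
  simpa [hsdef] using main k
end

section
/- Let N be a self-adjoint continuous linear operator on a complex Hilbert space H with ‖N‖ ≤ 1, and let E be the orthogonal projection onto the closed subspace ker(I − N²). Then for every x ∈ H the even powers N^{2k} x converge in norm to E x as k → ∞, and the sequence of norms ‖N^{2k} x‖ is monotonically nonincreasing with limit ‖E x‖. -/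
open Filter ContinuousLinearMap Function

/-! For `m ≤ n`, self-adjointness gives `Re ⟪N^(2m) x, N^(2n) x⟫ = ‖N^(m+n) x‖² ≥ ‖N^(2n) x‖²`,
hence `‖N^(2m) x - N^(2n) x‖² ≤ ‖N^(2m) x‖² - ‖N^(2n) x‖²`; since these norms decrease, the even
powers form a Cauchy sequence. Its limit is fixed by `N²`, so it lies in the range of `E`. Taking
adjoints in `N² E = E` gives `E N² = E`, so `E (N^(2k) x) = E x` for all `k` and the limit is
`E x`. -/

theorem antitone_norm_pow_apply {𝕜 E : Type*} [NontriviallyNormedField 𝕜]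
    [SeminormedAddCommGroup E] [NormedSpace 𝕜 E] {T : E →L[𝕜] E} (hT : ‖T‖ ≤ 1) (x : E) :
    Antitone fun k => ‖(T ^ k) x‖ :=
  antitone_nat_of_succ_le fun k => by
    rw [pow_succ', mul_apply_eq_comp]
    simpa using T.le_of_opNorm_le hT ((T ^ k) x)

theorem cauchySeq_of_norm_sub_sq_le {E : Type*} [SeminormedAddCommGroup E] {u : ℕ → E}
    (h : ∀ m n, m ≤ n → ‖u m - u n‖ ^ 2 ≤ ‖u m‖ ^ 2 - ‖u n‖ ^ 2) : CauchySeq u := by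
  have hanti : Antitone fun n => ‖u n‖ ^ 2 := fun m n hmn =>
    sub_nonneg.1 ((sq_nonneg _).trans (h m n hmn))
  have hcauchy : CauchySeq fun n => ‖u n‖ ^ 2 :=
    (tendsto_atTop_ciInf hanti ⟨0, by rintro _ ⟨n, rfl⟩; positivity⟩).cauchySeq
  rw [Metric.cauchySeq_iff'] at hcauchy ⊢
  intro ε hε
  obtain ⟨N, hN⟩ := hcauchy (ε ^ 2) (by positivity)
  refine ⟨N, fun n hn => lt_of_pow_lt_pow_left₀ 2 hε.le ?_⟩
  rw [dist_comm, dist_eq_norm]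
  calc ‖u N - u n‖ ^ 2 ≤ ‖u N‖ ^ 2 - ‖u n‖ ^ 2 := h N n hn
    _ < ε ^ 2 := by linarith [(abs_sub_lt_iff.1 (hN n hn)).2]

theorem apply_eq_of_tendsto_iterate {α β : Type*} [TopologicalSpace α] [TopologicalSpace β]
    [T2Space β] {f : α → β} {g : α → α} (hf : Continuous f) (hfg : ∀ z, f (g z) = f z)
    {x y : α} (hy : Tendsto (fun k => g^[k] x) atTop (nhds y)) : f y = f x := by
  have hconst : ∀ k, f (g^[k] x) = f x := fun k => by
    induction k with
    | zero => rfl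
    | succ k ih => rw [iterate_succ_apply', hfg, ih]
  refine tendsto_nhds_unique ((hf.tendsto y).comp hy) ?_
  simp only [comp_def, hconst, tendsto_const_nhds]

theorem IsSelfAdjoint.mul_eq_of_mul_eq {R : Type*} [Mul R] [StarMul R] {p t : R}
    (hp : IsSelfAdjoint p) (ht : IsSelfAdjoint t) (h : t * p = p) : p * t = p := by
  simpa only [star_mul, hp.star_eq, ht.star_eq] using congrArg star h

section SelfAdjoint

variable {𝕜 E : Type*} [RCLike 𝕜] [NormedAddCommGroup E] [InnerProductSpace 𝕜 E] [CompleteSpace E]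

theorem IsSelfAdjoint.inner_pow_apply_pow_apply_s9 {T : E →L[𝕜] E} (hT : IsSelfAdjoint T) (x : E)
    (m n : ℕ) : inner 𝕜 ((T ^ m) x) ((T ^ n) x) = inner 𝕜 x ((T ^ (m + n)) x) := by
  rw [(hT.pow m).isSymmetric.apply_clm, ← mul_apply_eq_comp, ← pow_add]

theorem IsSelfAdjoint.re_inner_pow_two_mul_apply {T : E →L[𝕜] E} (hT : IsSelfAdjoint T) (x : E)
    (m n : ℕ) :
    RCLike.re (inner 𝕜 ((T ^ (2 * m)) x) ((T ^ (2 * n)) x)) = ‖(T ^ (m + n)) x‖ ^ 2 := by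
  rw [hT.inner_pow_apply_pow_apply_s9, show 2 * m + 2 * n = (m + n) + (m + n) by ring,
    ← hT.inner_pow_apply_pow_apply_s9, inner_self_eq_norm_sq]

theorem IsSelfAdjoint.norm_sub_sq_le_pow_two_mul {T : E →L[𝕜] E} (hT : IsSelfAdjoint T)
    (hT1 : ‖T‖ ≤ 1) (x : E) {m n : ℕ} (hmn : m ≤ n) :
    ‖(T ^ (2 * m)) x - (T ^ (2 * n)) x‖ ^ 2 ≤ ‖(T ^ (2 * m)) x‖ ^ 2 - ‖(T ^ (2 * n)) x‖ ^ 2 := by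
  have hle : ‖(T ^ (2 * n)) x‖ ^ 2 ≤ ‖(T ^ (m + n)) x‖ ^ 2 :=
    pow_le_pow_left₀ (norm_nonneg _) (antitone_norm_pow_apply hT1 x (by omega)) 2
  rw [norm_sub_sq (𝕜 := 𝕜), hT.re_inner_pow_two_mul_apply]
  linarith

theorem IsSelfAdjoint.cauchySeq_pow_two_mul_apply_s9 {T : E →L[𝕜] E} (hT : IsSelfAdjoint T)
    (hT1 : ‖T‖ ≤ 1) (x : E) : CauchySeq fun k => (T ^ (2 * k)) x :=
  cauchySeq_of_norm_sub_sq_le fun _ _ => hT.norm_sub_sq_le_pow_two_mul hT1 x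

end SelfAdjoint

/-- Let `N` be self-adjoint with `‖N‖ ≤ 1` on a complex Hilbert space,
and let `E` be the orthogonal projection onto `ker (I − N²)` (characterized as the
self-adjoint idempotent with range `ker (I − N∘N)`). Then for every `x`, `N^(2k) x → E x`
in norm, and the norms `‖N^(2k) x‖` are monotonically nonincreasing with limit `‖E x‖`. -/
theorem stmt9 {H : Type*} [NormedAddCommGroup H] [InnerProductSpace ℂ H] [CompleteSpace H]
    (N : H →L[ℂ] H) (hN : IsSelfAdjoint N) (hNnorm : ‖N‖ ≤ 1)
    (E : H →L[ℂ] H) (hE : IsSelfAdjoint E) (hE2 : E ∘L E = E)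
    (hErange : LinearMap.range (E : H →ₗ[ℂ] H) = LinearMap.ker (((1 : H →L[ℂ] H) - N ∘L N : H →L[ℂ] H) : H →ₗ[ℂ] H)) :
    ∀ x : H,
      Tendsto (fun k : ℕ => (N ^ (2 * k)) x) atTop (nhds (E x)) ∧
      Antitone (fun k : ℕ => ‖(N ^ (2 * k)) x‖) ∧
      Tendsto (fun k : ℕ => ‖(N ^ (2 * k)) x‖) atTop (nhds ‖E x‖) := by
  intro x
  have hiter : (fun k => (N ^ (2 * k)) x) = fun k => (⇑(N ^ 2))^[k] x := by
    funext k
    rw [pow_mul, pow_apply_eq_iterate]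
  have hmem_range : ∀ z, z ∈ LinearMap.range (E : H →ₗ[ℂ] H) ↔ (N ^ 2) z = z := fun z => by
    rw [hErange, LinearMap.mem_ker, coe_coe, sub_apply, one_apply_eq_self, sub_eq_zero, eq_comm,
      sq, mul_def]
  obtain ⟨y, hy⟩ := cauchySeq_tendsto_of_complete (hN.cauchySeq_pow_two_mul_apply_s9 hNnorm x)
  rw [hiter] at hy
  have hEy : E y = y := by
    obtain ⟨z, rfl⟩ := (hmem_range y).2 <|
      isFixedPt_of_tendsto_iterate hy (N ^ 2).continuous.continuousAt
    exact DFunLike.congr_fun hE2 z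
  have hENN : E * N ^ 2 = E :=
    hE.mul_eq_of_mul_eq (hN.pow 2) (ext fun z => (hmem_range (E z)).1 ⟨z, rfl⟩)
  have hlim : Tendsto (fun k => (N ^ (2 * k)) x) atTop (nhds (E x)) := by
    have hEx : E y = E x :=
      apply_eq_of_tendsto_iterate E.continuous (fun z => DFunLike.congr_fun hENN z) hy
    rwa [hiter, ← hEx, hEy]
  exact ⟨hlim, fun i j hij => antitone_norm_pow_apply hNnorm x (by omega), hlim.norm⟩
end

section
/- Let N be a self-adjoint continuous linear operator on a complex Hilbert space H with ‖N‖ ≤ 1, and let E be the orthogonal projection onto the closed subspace ker(I − N²). Then for every x ∈ H the odd powers N^{2k+1} x converge in norm to N(E x) as k → ∞, and the sequence of norms ‖N^{2k+1} x‖ is monotonically nonincreasing with limit ‖E x‖ (in particular ‖N(E x)‖ = ‖E x‖). -/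
/-!
Since `N` is a contraction, `‖N^n x‖²` is nonincreasing and hence convergent; since `N` is
self-adjoint, `‖N^(2k) x - N^(2m) x‖² = ‖N^(2k) x‖² - 2 ‖N^(k+m) x‖² + ‖N^(2m) x‖²`, which
therefore tends to `0`. So the even powers `N^(2k) x` converge to some `y`, necessarily fixed by
`N²`. Taking adjoints in `N² E = E` gives `E N² = E`, whence `E x = E (N^(2k) x) → E y = y`.
The odd powers then converge to `N y = N (E x)`, and `‖N y‖ = ‖y‖` because the contraction `N`
maps `N y` back to `y`.
-/

open Filter Function

open scoped InnerProductSpace Topology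

namespace ContinuousLinearMap

section Normed

variable {𝕜 E : Type*} [NontriviallyNormedField 𝕜] [SeminormedAddCommGroup E] [NormedSpace 𝕜 E]
  {T : E →L[𝕜] E}

theorem antitone_norm_pow_apply (hT : ‖T‖ ≤ 1) (x : E) : Antitone fun n : ℕ => ‖(T ^ n) x‖ := by
  refine antitone_nat_of_succ_le fun n => ?_
  rw [pow_succ', mul_apply_eq_comp]
  simpa only [one_mul] using T.le_of_opNorm_le hT ((T ^ n) x)

theorem norm_apply_eq_of_apply_apply_eq (hT : ‖T‖ ≤ 1) {x : E} (hx : T (T x) = x) :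
    ‖T x‖ = ‖x‖ := by
  refine le_antisymm (by simpa only [one_mul] using T.le_of_opNorm_le hT x) ?_
  conv_lhs => rw [← hx]
  simpa only [one_mul] using T.le_of_opNorm_le hT (T x)

theorem isFixedPt_of_tendsto_pow_apply [T2Space E] {x y : E}
    (hy : Tendsto (fun k : ℕ => (T ^ k) x) atTop (𝓝 y)) : IsFixedPt T y := by
  refine tendsto_nhds_unique ((T.continuous.tendsto y).comp hy) ?_
  simpa only [comp_def, pow_succ', mul_apply_eq_comp]
    using hy.comp (tendsto_add_atTop_nat 1)

end Normed

variable {𝕜 H : Type*} [RCLike 𝕜] [NormedAddCommGroup H] [InnerProductSpace 𝕜 H] [CompleteSpace H]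
  {T : H →L[𝕜] H}

theorem _root_.IsSelfAdjoint.norm_pow_two_mul_apply_sub_sq (hT : IsSelfAdjoint T) (x : H)
    (k m : ℕ) : ‖(T ^ (2 * k)) x - (T ^ (2 * m)) x‖ ^ 2
      = ‖(T ^ (2 * k)) x‖ ^ 2 - 2 * ‖(T ^ (k + m)) x‖ ^ 2 + ‖(T ^ (2 * m)) x‖ ^ 2 := by
  have hinner : ⟪(T ^ (2 * k)) x, (T ^ (2 * m)) x⟫_𝕜 = ⟪(T ^ (k + m)) x, (T ^ (k + m)) x⟫_𝕜 :=
    calc ⟪(T ^ (2 * k)) x, (T ^ (2 * m)) x⟫_𝕜 = ⟪x, (T ^ (2 * k)) ((T ^ (2 * m)) x)⟫_𝕜 :=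
          (hT.pow _).isSymmetric _ _
      _ = ⟪x, (T ^ (k + m)) ((T ^ (k + m)) x)⟫_𝕜 := by
          rw [← mul_apply_eq_comp, ← mul_apply_eq_comp, ← pow_add, ← pow_add, ← two_mul, mul_add]
      _ = ⟪(T ^ (k + m)) x, (T ^ (k + m)) x⟫_𝕜 := ((hT.pow _).isSymmetric _ _).symm
  rw [@norm_sub_sq 𝕜, hinner, inner_self_eq_norm_sq]

theorem _root_.IsSelfAdjoint.cauchySeq_pow_two_mul_apply_s10 (hT : IsSelfAdjoint T) (hT1 : ‖T‖ ≤ 1)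
    (x : H) : CauchySeq fun k : ℕ => (T ^ (2 * k)) x := by
  set a : ℕ → ℝ := fun n => ‖(T ^ n) x‖ ^ 2
  obtain ⟨L, ha⟩ : ∃ L, Tendsto a atTop (𝓝 L) :=
    ⟨_, tendsto_atTop_ciInf (fun i j hij => pow_le_pow_left₀ (norm_nonneg _)
      (antitone_norm_pow_apply hT1 x hij) 2) ⟨0, by rintro _ ⟨n, rfl⟩; positivity⟩⟩
  have htwice (i : ℕ × ℕ → ℕ) (hi : Tendsto i atTop atTop) :
      Tendsto (fun n => 2 * i n) atTop atTop :=
    tendsto_atTop_mono (fun n => Nat.le_mul_of_pos_left _ two_pos) hi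
  have hfst : Tendsto (fun n : ℕ × ℕ => n.1) atTop atTop :=
    tendsto_atTop_atTop.2 fun b => ⟨(b, b), fun n hn => hn.1⟩
  have hsnd : Tendsto (fun n : ℕ × ℕ => n.2) atTop atTop :=
    tendsto_atTop_atTop.2 fun b => ⟨(b, b), fun n hn => hn.2⟩
  have hdist_sq : Tendsto (fun n : ℕ × ℕ => dist ((T ^ (2 * n.1)) x) ((T ^ (2 * n.2)) x) ^ 2)
      atTop (𝓝 0) := by
    simp only [dist_eq_norm, hT.norm_pow_two_mul_apply_sub_sq]
    rw [show (0 : ℝ) = L - 2 * L + L by ring]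
    exact ((ha.comp (htwice _ hfst)).sub
      ((ha.comp (tendsto_atTop_mono (fun n => Nat.le_add_right _ _) hfst)).const_mul 2)).add
      (ha.comp (htwice _ hsnd))
  rw [cauchySeq_iff_tendsto_dist_atTop_0]
  simpa only [Real.sqrt_sq dist_nonneg, Real.sqrt_zero] using hdist_sq.sqrt

theorem apply_eq_of_tendsto_pow_apply {S E : H →L[𝕜] H} (hS : IsSelfAdjoint S)
    (hE : IsSelfAdjoint E) (hE2 : E ∘L E = E)
    (hrange : LinearMap.range (E : H →ₗ[𝕜] H) = LinearMap.ker ((1 - S : H →L[𝕜] H) : H →ₗ[𝕜] H))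
    {x y : H} (hy : Tendsto (fun k : ℕ => (S ^ k) x) atTop (𝓝 y)) : E x = y := by
  have hmem_range {v : H} : v ∈ LinearMap.range (E : H →ₗ[𝕜] H) ↔ S v = v := by
    rw [hrange, LinearMap.mem_ker, coe_coe, sub_apply, one_apply_eq_self, sub_eq_zero, eq_comm]
  have hSE : S * E = E := ext fun v => hmem_range.1 (LinearMap.mem_range_self _ v)
  have hES : E * S = E := by
    simpa only [star_mul, hS.star_eq, hE.star_eq] using congrArg star hSE
  have hESk (k : ℕ) : E * S ^ k = E := by
    induction k with
    | zero => exact mul_one E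
    | succ k ih => rw [pow_succ, ← mul_assoc, ih, hES]
  have hEy : E y = y :=
    LinearMap.IsIdempotentElem.mem_range_iff (IsIdempotentElem.toLinearMap hE2) |>.1
      (hmem_range.2 (isFixedPt_of_tendsto_pow_apply hy))
  refine hEy ▸ tendsto_nhds_unique ?_ ((E.continuous.tendsto y).comp hy)
  simpa only [comp_def, ← mul_apply_eq_comp, hESk] using tendsto_const_nhds

end ContinuousLinearMap

/-- Let `N` be self-adjoint with `‖N‖ ≤ 1` on a complex Hilbert space,
and let `E` be the orthogonal projection onto `ker (I − N²)`. Then for every `x`, the odd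
powers `N^(2k+1) x` converge in norm to `N (E x)`, the norms `‖N^(2k+1) x‖` are
monotonically nonincreasing with limit `‖E x‖`, and `‖N (E x)‖ = ‖E x‖`. -/
theorem stmt10 {H : Type*} [NormedAddCommGroup H] [InnerProductSpace ℂ H] [CompleteSpace H]
    (N : H →L[ℂ] H) (hN : IsSelfAdjoint N) (hNnorm : ‖N‖ ≤ 1)
    (E : H →L[ℂ] H) (hE : IsSelfAdjoint E) (hE2 : E ∘L E = E)
    (hErange : LinearMap.range (E : H →ₗ[ℂ] H) = LinearMap.ker (((1 : H →L[ℂ] H) - N ∘L N : H →L[ℂ] H) : H →ₗ[ℂ] H)) :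
    ∀ x : H,
      Tendsto (fun k : ℕ => (N ^ (2 * k + 1)) x) atTop (nhds (N (E x))) ∧
      Antitone (fun k : ℕ => ‖(N ^ (2 * k + 1)) x‖) ∧
      Tendsto (fun k : ℕ => ‖(N ^ (2 * k + 1)) x‖) atTop (nhds ‖E x‖) ∧
      ‖N (E x)‖ = ‖E x‖ := by
  intro x
  obtain ⟨y, hy⟩ := cauchySeq_tendsto_of_complete (hN.cauchySeq_pow_two_mul_apply_s10 hNnorm x)
  have hy' : Tendsto (fun k : ℕ => ((N * N) ^ k) x) atTop (𝓝 y) := by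
    simpa only [pow_mul, sq] using hy
  have hEx : E x = y :=
    ContinuousLinearMap.apply_eq_of_tendsto_pow_apply (hN.pow 2) hE hE2 hErange hy'
  have hNNEx : N (N (E x)) = E x := hEx ▸ ContinuousLinearMap.isFixedPt_of_tendsto_pow_apply hy'
  have hnorm : ‖N (E x)‖ = ‖E x‖ :=
    ContinuousLinearMap.norm_apply_eq_of_apply_apply_eq hNnorm hNNEx
  have hodd : Tendsto (fun k : ℕ => (N ^ (2 * k + 1)) x) atTop (𝓝 (N (E x))) := by
    simpa only [pow_succ', mul_apply_eq_comp, hEx, comp_def] using (N.continuous.tendsto y).comp hy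
  refine ⟨hodd, ?_, hnorm ▸ hodd.norm, hnorm⟩
  exact (ContinuousLinearMap.antitone_norm_pow_apply hNnorm x).comp_monotone fun i j hij => by omega
end

section
/- Suppose h₀, h∞ ∈ H satisfy (I − P∘R∘P∘R)h∞ = h₀ and P h₀ = 0. Then ‖Q(R h∞) − Q(R(Q(R h∞)))‖² = ‖h∞‖² + ‖h₀‖² − ‖P(R(P(R h∞)))‖² − 2 Re⟨h₀, R(P(R h∞)) + R h∞⟩. -/
/-!
Put `u := h∞ + P (R h∞)`. Since `P h₀ = 0` means `P h∞ = P R P R h∞`, one gets `P (R u) = P u`,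
`h₀ = u - P u`, and the vector on the left-hand side is `R u - u`. For a self-adjoint involution
`R`, `‖R u - u‖² = 2‖u‖² - 2 Re⟨u, R u⟩`; splitting `u = P u + (u - P u)` orthogonally and using
`⟨P u, R u⟩ = ⟨P u, P (R u)⟩ = ‖P u‖²` turns this into `2‖h₀‖² - 2 Re⟨h₀, R u⟩`, which is the
right-hand side because `‖h∞‖² - ‖P h∞‖² = ‖h₀‖²`.
-/

section

open RCLike
open scoped InnerProductSpace

variable {𝕜 E : Type*} [RCLike 𝕜] [NormedAddCommGroup E] [InnerProductSpace 𝕜 E]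

namespace LinearMap

theorem IsSymmetricProjection.map_map {P : E →ₗ[𝕜] E} (hP : P.IsSymmetricProjection) (x : E) :
    P (P x) = P x :=
  congr($hP.isIdempotentElem.eq x)

theorem IsSymmetricProjection.inner_map_self {P : E →ₗ[𝕜] E} (hP : P.IsSymmetricProjection)
    (x : E) : ⟪P x, x⟫_𝕜 = ‖P x‖ ^ 2 := by
  conv_lhs => rw [← hP.map_map x]
  rw [hP.isSymmetric, inner_self_eq_norm_sq_to_K]

theorem IsSymmetricProjection.norm_sq_eq_add_norm_sub_sq {P : E →ₗ[𝕜] E}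
    (hP : P.IsSymmetricProjection) (x : E) : ‖x‖ ^ 2 = ‖P x‖ ^ 2 + ‖x - P x‖ ^ 2 := by
  have horth : ⟪P x, x - P x⟫_𝕜 = 0 := by
    rw [hP.isSymmetric, map_sub, hP.map_map, sub_self, inner_zero_right]
  simpa only [add_sub_cancel, sq] using
    norm_add_sq_eq_norm_sq_add_norm_sq_of_inner_eq_zero _ _ horth

theorem IsSymmetric.norm_map_sub_sq_of_involutive {R : E →ₗ[𝕜] E} (hR : R.IsSymmetric)
    (hR2 : Function.Involutive R) (u : E) :
    ‖R u - u‖ ^ 2 = 2 * ‖u‖ ^ 2 - 2 * re ⟪u, R u⟫_𝕜 := by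
  have hnorm : ‖R u‖ = ‖u‖ := by
    rw [norm_eq_sqrt_re_inner (𝕜 := 𝕜), norm_eq_sqrt_re_inner (𝕜 := 𝕜), hR, hR2]
  rw [norm_sub_sq (𝕜 := 𝕜), hnorm, hR]
  ring

theorem IsSymmetric.norm_map_sub_sq_of_map_map_eq {R P : E →ₗ[𝕜] E} (hR : R.IsSymmetric)
    (hR2 : Function.Involutive R) (hP : P.IsSymmetricProjection) {u : E}
    (hu : P (R u) = P u) :
    ‖R u - u‖ ^ 2 = 2 * ‖u - P u‖ ^ 2 - 2 * re ⟪u - P u, R u⟫_𝕜 := by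
  have hPu : ⟪P u, R u⟫_𝕜 = ‖P u‖ ^ 2 := by
    rw [← hu, hP.inner_map_self]
  rw [hR.norm_map_sub_sq_of_involutive hR2, hP.norm_sq_eq_add_norm_sub_sq u, inner_sub_left, hPu,
    map_sub, ← ofReal_pow, ofReal_re]
  ring

end LinearMap

end

/-- If `(I − P∘R∘P∘R) h∞ = h₀` and `P h₀ = 0` then, with `Q = I − P`,
`‖Q(R h∞) − Q(R(Q(R h∞)))‖² = ‖h∞‖² + ‖h₀‖² − ‖P(R(P(R h∞)))‖²
  − 2 Re⟨h₀, R(P(R h∞)) + R h∞⟩`. -/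
theorem stmt15 {H : Type*} [NormedAddCommGroup H] [InnerProductSpace ℂ H] [CompleteSpace H]
    (R P : H →L[ℂ] H)
    (hR : IsSelfAdjoint R) (hR2 : R ∘L R = 1)
    (hP : IsSelfAdjoint P) (hP2 : P ∘L P = P)
    (h₀ hinf : H)
    (heq : ((1 : H →L[ℂ] H) - P ∘L R ∘L P ∘L R) hinf = h₀)
    (hh₀ : P h₀ = 0) :
    ‖((1 : H →L[ℂ] H) - P) (R hinf) -
        ((1 : H →L[ℂ] H) - P) (R (((1 : H →L[ℂ] H) - P) (R hinf)))‖ ^ 2 =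
      ‖hinf‖ ^ 2 + ‖h₀‖ ^ 2 - ‖P (R (P (R hinf)))‖ ^ 2 -
        2 * (inner ℂ h₀ (R (P (R hinf)) + R hinf) : ℂ).re := by
  have hRinv : Function.Involutive R := fun x => congr($hR2 x)
  have hPproj : (P : H →ₗ[ℂ] H).IsSymmetricProjection :=
    ContinuousLinearMap.isStarProjection_iff_isSymmetricProjection.mp ⟨hP2, hP⟩
  have hPP : ∀ x, P (P x) = P x := hPproj.map_map
  simp only [sub_apply, one_apply_eq_self, ContinuousLinearMap.comp_apply] at heq ⊢
  have hPh : P (R (P (R hinf))) = P hinf := by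
    rw [← heq, map_sub, hPP, sub_eq_zero] at hh₀
    exact hh₀.symm
  rw [hPh] at heq
  set u := hinf + P (R hinf) with hu_def
  have hu : P (R u) = P u := by
    rw [hu_def, map_add, map_add, map_add, hPh, hPP, add_comm]
  have hQu : u - P u = h₀ := by
    rw [← heq, hu_def, map_add, hPP]
    abel
  have hlhs : R hinf - P (R hinf) - (R (R hinf - P (R hinf)) - P (R (R hinf - P (R hinf))))
      = R u - u := by
    rw [hu_def, map_sub, map_add, hRinv, map_sub, hPh]
    abel
  have hRu : R (P (R hinf)) + R hinf = R u := by
    rw [hu_def, map_add, add_comm]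
  have hRu_sub := hR.isSymmetric.norm_map_sub_sq_of_map_map_eq hRinv hPproj hu
  have hpyth := hPproj.norm_sq_eq_add_norm_sub_sq hinf
  simp only [ContinuousLinearMap.coe_coe, RCLike.re_to_complex] at hRu_sub hpyth
  rw [hlhs, hRu_sub, hQu, hPh, hRu, hpyth, heq]
  ring
end

section
/- Let h₀ ∈ H with P h₀ = 0, let h_k := ∑_{i=0}^{k} (P∘R∘P∘R)^i h₀, let N := P∘R∘P + Q∘R∘Q and Z := P∘R∘Q + Q∘R∘P, and let χ be the orthogonal projection of H onto the closed subspace ker Z. Then Q(R h_k) − Q(R(Q(R h_k))) converges in norm as k → ∞ to (N − I)(χ h₀). -/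
/-!
Write `Q = 1 - P`. Relative to `H = ran P ⊕ ran Q`, `N` and `Z` are the block-diagonal and
off-diagonal parts of `R = N + Z`: `N` commutes with `P` and `P Z = Z Q`, and `R² = 1` splits
into `Z N = -N Z` and `Z² = 1 - N²`. So `N` is a self-adjoint contraction and
`ker Z = ker Z² = ker (1 - N²)`.

`PRPR` acts as `N²` on `ran P` and maps `h₀ ∈ ran Q` to `N Z h₀`. As `Z` anticommutes with odd
powers of `N`, the partial sums telescope: `Q R h_k = N^(2k+1) h₀` and `Q R Q R h_k = N^(2k+2) h₀`.

For a self-adjoint contraction, `‖y - N² y‖² ≤ ‖y‖² - ‖N y‖²`; with `y = N^n v` the right side is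
a gap of the decreasing sequence `‖N^n v‖²`, so `N^n (1 - N²) v → 0`. Uniform boundedness of the
powers extends this to the closure of `ran (1 - N²)`, i.e. to `(ker (1 - N²))ᗮ`, while `N²` fixes
`ker (1 - N²)`. Hence `N^(2k) → χ` strongly and `N^(2k+1) h₀ - N^(2k+2) h₀ → (N - 1) χ h₀`.
-/

open Filter Topology ContinuousLinearMap

section BlockDecomposition

variable {A : Type*} [Ring A]

def blockDiag (P R : A) : A := P * R * P + (1 - P) * R * (1 - P)

def blockOffDiag (P R : A) : A := P * R * (1 - P) + (1 - P) * R * P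

variable {P R : A}

theorem commute_blockDiag (hP : IsIdempotentElem P) : Commute P (blockDiag P R) := by
  simp only [Commute, SemiconjBy, blockDiag, mul_add, add_mul, mul_sub, sub_mul, mul_one, one_mul,
    mul_assoc, hP.mul_self_mul, hP.eq]
  abel

theorem mul_blockOffDiag (hP : IsIdempotentElem P) :
    P * blockOffDiag P R = blockOffDiag P R * (1 - P) := by
  simp only [blockOffDiag, mul_add, add_mul, mul_sub, sub_mul, mul_one, one_mul, mul_assoc,
    hP.mul_self_mul, hP.eq]
  abel

theorem blockDiag_mul (hP : IsIdempotentElem P) : blockDiag P R * P = P * R * P := by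
  simp only [blockDiag, add_mul, mul_sub, sub_mul, mul_one, one_mul, mul_assoc, hP.eq]
  abel

theorem blockDiag_mul_one_sub (hP : IsIdempotentElem P) :
    blockDiag P R * (1 - P) = (1 - P) * R * (1 - P) := by
  simp only [blockDiag, add_mul, mul_sub, sub_mul, mul_one, one_mul, mul_assoc, hP.eq]
  abel

theorem blockOffDiag_mul (hP : IsIdempotentElem P) :
    blockOffDiag P R * P = (1 - P) * R * P := by
  simp only [blockOffDiag, add_mul, mul_sub, sub_mul, mul_one, one_mul, mul_assoc, hP.eq]
  abel

theorem blockOffDiag_mul_one_sub (hP : IsIdempotentElem P) :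
    blockOffDiag P R * (1 - P) = P * R * (1 - P) := by
  simp only [blockOffDiag, add_mul, mul_sub, sub_mul, mul_one, one_mul, mul_assoc, hP.eq]
  abel

theorem semiconjBy_blockOffDiag_blockDiag (hP : IsIdempotentElem P) (hR : R * R = 1) :
    SemiconjBy (blockOffDiag P R) (blockDiag P R) (-blockDiag P R) := by
  have hR' : ∀ x, R * (R * x) = x := fun x ↦ by rw [← mul_assoc, hR, one_mul]
  simp only [SemiconjBy, blockOffDiag, blockDiag, mul_add, add_mul, mul_sub, sub_mul, mul_one,
    one_mul, mul_assoc, hP.mul_self_mul, hR', hP.eq, hR, neg_mul]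
  abel

theorem blockOffDiag_mul_self (hP : IsIdempotentElem P) (hR : R * R = 1) :
    blockOffDiag P R * blockOffDiag P R = 1 - blockDiag P R * blockDiag P R := by
  have hR' : ∀ x, R * (R * x) = x := fun x ↦ by rw [← mul_assoc, hR, one_mul]
  simp only [blockOffDiag, blockDiag, mul_add, add_mul, mul_sub, sub_mul, mul_one, one_mul,
    mul_assoc, hP.mul_self_mul, hR', hP.eq, hR]
  abel

theorem mul_blockDiag_pow_mul_blockOffDiag_mul_one_sub (hP : IsIdempotentElem P) (m : ℕ) :
    P * (blockDiag P R ^ m * blockOffDiag P R * (1 - P)) =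
      blockDiag P R ^ m * blockOffDiag P R * (1 - P) := by
  rw [← mul_assoc, ← mul_assoc, ((commute_blockDiag hP).pow_right m).eq, mul_assoc _ P,
    mul_blockOffDiag hP, mul_assoc, mul_assoc, hP.one_sub.eq, mul_assoc]

theorem pow_succ_mul_one_sub_eq_blockDiag_pow_mul (hP : IsIdempotentElem P) (i : ℕ) :
    (P * R * P * R) ^ (i + 1) * (1 - P) =
      blockDiag P R ^ (2 * i + 1) * blockOffDiag P R * (1 - P) := by
  have hA : P * R * P * R = blockDiag P R * P * R := by rw [blockDiag_mul hP]
  have hAP : P * R * P * R * P = blockDiag P R * blockDiag P R * P := by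
    rw [hA, mul_assoc _ R, mul_assoc (blockDiag P R), ← mul_assoc P, ← blockDiag_mul hP, mul_assoc]
  induction i with
  | zero =>
    rw [zero_add, pow_one, hA, mul_assoc, mul_assoc, ← mul_assoc P, ← blockOffDiag_mul_one_sub hP,
      mul_zero, zero_add, pow_one, mul_assoc]
  | succ i ih =>
    calc (P * R * P * R) ^ (i + 1 + 1) * (1 - P)
        = P * R * P * R * P * (blockDiag P R ^ (2 * i + 1) * blockOffDiag P R * (1 - P)) := by
          rw [mul_assoc (P * R * P * R) P, mul_blockDiag_pow_mul_blockOffDiag_mul_one_sub hP, ← ih,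
            pow_succ' _ (i + 1), mul_assoc]
      _ = blockDiag P R ^ (2 * (i + 1) + 1) * blockOffDiag P R * (1 - P) := by
          rw [hAP, mul_assoc _ P, mul_blockDiag_pow_mul_blockOffDiag_mul_one_sub hP,
            show 2 * (i + 1) + 1 = 2 + (2 * i + 1) by ring, pow_add (blockDiag P R) 2, sq]
          simp only [mul_assoc]

theorem one_sub_mul_mul_pow_succ_mul_one_sub (hP : IsIdempotentElem P) (hR : R * R = 1) (i : ℕ) :
    (1 - P) * R * (P * R * P * R) ^ (i + 1) * (1 - P) =
      blockDiag P R ^ (2 * (i + 1) + 1) * (1 - P) - blockDiag P R ^ (2 * i + 1) * (1 - P) := by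
  have hodd : blockOffDiag P R * blockDiag P R ^ (2 * i + 1) =
      -blockDiag P R ^ (2 * i + 1) * blockOffDiag P R := by
    rw [((semiconjBy_blockOffDiag_blockDiag hP hR).pow_right _).eq, (odd_two_mul_add_one i).neg_pow]
  calc (1 - P) * R * (P * R * P * R) ^ (i + 1) * (1 - P)
      = (1 - P) * R * P * (blockDiag P R ^ (2 * i + 1) * blockOffDiag P R * (1 - P)) := by
        rw [mul_assoc _ _ (1 - P), pow_succ_mul_one_sub_eq_blockDiag_pow_mul hP, mul_assoc _ P,
          mul_blockDiag_pow_mul_blockOffDiag_mul_one_sub hP]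
    _ = -blockDiag P R ^ (2 * i + 1) * (blockOffDiag P R * blockOffDiag P R) * (1 - P) := by
        rw [← blockOffDiag_mul hP, mul_assoc _ P, mul_blockDiag_pow_mul_blockOffDiag_mul_one_sub hP,
          ← mul_assoc, ← mul_assoc, hodd]
        simp only [mul_assoc]
    _ = _ := by
        rw [blockOffDiag_mul_self hP hR, show 2 * (i + 1) + 1 = 2 * i + 1 + 2 by ring,
          pow_add (blockDiag P R) (2 * i + 1) 2, sq]
        noncomm_ring

theorem one_sub_mul_mul_sum_pow_mul_one_sub (hP : IsIdempotentElem P) (hR : R * R = 1) (k : ℕ) :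
    (1 - P) * R * (∑ i ∈ Finset.range (k + 1), (P * R * P * R) ^ i) * (1 - P) =
      blockDiag P R ^ (2 * k + 1) * (1 - P) := by
  rw [Finset.sum_range_succ', pow_zero, mul_add, add_mul, mul_one, ← blockDiag_mul_one_sub hP,
    Finset.mul_sum, Finset.sum_mul]
  simp_rw [one_sub_mul_mul_pow_succ_mul_one_sub hP hR]
  rw [Finset.sum_range_sub (fun i ↦ blockDiag P R ^ (2 * i + 1) * (1 - P)), mul_zero, zero_add,
    pow_one, sub_add_cancel]

theorem one_sub_mul_mul_blockDiag_pow_mul_one_sub (hP : IsIdempotentElem P) (m : ℕ) :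
    (1 - P) * R * (blockDiag P R ^ m * (1 - P)) = blockDiag P R ^ (m + 1) * (1 - P) := by
  have hQ : Commute (1 - P) (blockDiag P R ^ m) :=
    ((Commute.one_left _).sub_left (commute_blockDiag hP)).pow_right m
  have hfix : (1 - P) * (blockDiag P R ^ m * (1 - P)) = blockDiag P R ^ m * (1 - P) := by
    rw [← mul_assoc, hQ.eq, mul_assoc, hP.one_sub.eq]
  rw [← hfix, ← mul_assoc, ← blockDiag_mul_one_sub hP, mul_assoc, hfix, ← mul_assoc, ← pow_succ']

theorem IsSelfAdjoint.blockDiag [StarRing A] (hP : IsSelfAdjoint P) (hR : IsSelfAdjoint R) :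
    IsSelfAdjoint (blockDiag P R) := by
  simpa only [_root_.blockDiag, hP.star_eq, star_sub, star_one] using
    (hR.conjugate' P).add (hR.conjugate' (1 - P))

theorem IsSelfAdjoint.blockOffDiag [StarRing A] (hP : IsSelfAdjoint P) (hR : IsSelfAdjoint R) :
    IsSelfAdjoint (blockOffDiag P R) := by
  simp only [isSelfAdjoint_iff, _root_.blockOffDiag, star_add, star_mul, star_sub, star_one,
    hP.star_eq, hR.star_eq, mul_assoc, add_comm]

end BlockDecomposition

section Contraction

variable {𝕜 E : Type*} [NontriviallyNormedField 𝕜] [SeminormedAddCommGroup E] [NormedSpace 𝕜 E]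
  {T : E →L[𝕜] E}

theorem ContinuousLinearMap.norm_apply_le_of_opNorm_le_one (hT : ‖T‖ ≤ 1) (x : E) :
    ‖T x‖ ≤ ‖x‖ := by
  simpa using T.le_of_opNorm_le hT x

theorem ContinuousLinearMap.opNorm_pow_le_one (hT : ‖T‖ ≤ 1) : ∀ n : ℕ, ‖T ^ n‖ ≤ 1
  | 0 => norm_id_le
  | n + 1 => (norm_pow_le' T n.succ_pos).trans (pow_le_one₀ (norm_nonneg T) hT)

theorem ContinuousLinearMap.apply_apply_eq_of_mem_ker_one_sub_mul_self {p : E}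
    (hp : p ∈ (1 - T * T).ker) : T (T p) = p := by
  have hp : (1 - T * T) p = 0 := hp
  rw [sub_apply, one_apply_eq_self, sub_eq_zero] at hp
  exact hp.symm

end Contraction

section SelfAdjointContraction

variable {𝕜 E : Type*} [RCLike 𝕜] [NormedAddCommGroup E] [InnerProductSpace 𝕜 E] [CompleteSpace E]
  {T : E →L[𝕜] E}

theorem IsSelfAdjoint.norm_sub_apply_apply_sq_le (hT : IsSelfAdjoint T) (hT1 : ‖T‖ ≤ 1) (y : E) :
    ‖y - T (T y)‖ ^ 2 ≤ ‖y‖ ^ 2 - ‖T y‖ ^ 2 := by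
  have hsymm : inner 𝕜 (T y) (T y) = inner 𝕜 y (T (T y)) := hT.isSymmetric y (T y)
  have hinner : RCLike.re (inner 𝕜 y (T (T y))) = ‖T y‖ ^ 2 := by
    rw [← hsymm, inner_self_eq_norm_sq]
  have hTTy : ‖T (T y)‖ ≤ ‖T y‖ := T.norm_apply_le_of_opNorm_le_one hT1 (T y)
  rw [norm_sub_sq (𝕜 := 𝕜), hinner]
  nlinarith [norm_nonneg (T (T y))]

theorem IsSelfAdjoint.tendsto_pow_apply_one_sub_mul_self_apply (hT : IsSelfAdjoint T)
    (hT1 : ‖T‖ ≤ 1) (v : E) : Tendsto (fun n ↦ (T ^ n) ((1 - T * T) v)) atTop (𝓝 0) := by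
  set d : ℕ → ℝ := fun n ↦ ‖(T ^ n) v‖ ^ 2
  have hd : Antitone d := antitone_nat_of_succ_le fun n ↦ by
    show ‖(T ^ (n + 1)) v‖ ^ 2 ≤ ‖(T ^ n) v‖ ^ 2
    rw [pow_succ' T n, mul_apply_eq_comp]
    exact pow_le_pow_left₀ (norm_nonneg _) (T.norm_apply_le_of_opNorm_le_one hT1 _) 2
  have hgap : Tendsto (fun n ↦ d n - d (n + 1)) atTop (𝓝 0) := by
    have h := tendsto_atTop_ciInf hd ⟨0, by rintro _ ⟨n, rfl⟩; positivity⟩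
    simpa using h.sub (h.comp (tendsto_add_atTop_nat 1))
  have hbound : ∀ n, ‖(T ^ n) ((1 - T * T) v)‖ ≤ √(d n - d (n + 1)) := fun n ↦ by
    have hpow : T ^ n * (T * T) = T * (T * T ^ n) := by
      rw [← mul_assoc, ← pow_succ, ← pow_succ, pow_succ', pow_succ']
    have hsq := hT.norm_sub_apply_apply_sq_le hT1 ((T ^ n) v)
    rw [sub_apply, one_apply_eq_self, map_sub, ← mul_apply_eq_comp (T ^ n), hpow,
      mul_apply_eq_comp, mul_apply_eq_comp,
      Real.le_sqrt (norm_nonneg _) (sub_nonneg.2 (hd n.le_succ))]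
    show _ ≤ ‖(T ^ n) v‖ ^ 2 - ‖(T ^ (n + 1)) v‖ ^ 2
    rwa [pow_succ' T n, mul_apply_eq_comp]
  exact squeeze_zero_norm hbound (by simpa using hgap.sqrt)

theorem IsSelfAdjoint.tendsto_pow_apply_of_mem_orthogonal (hT : IsSelfAdjoint T) (hT1 : ‖T‖ ≤ 1)
    {x : E} (hx : x ∈ (1 - T * T).kerᗮ) :
    Tendsto (fun n ↦ (T ^ n) x) atTop (𝓝 0) := by
  have hS : IsSelfAdjoint (1 - T * T) := (IsSelfAdjoint.one _).sub (sq T ▸ hT.pow 2)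
  have hclosed : IsClosed {y : E | Tendsto (fun n ↦ (T ^ n) y) atTop (𝓝 0)} :=
    (LipschitzWith.uniformEquicontinuous (fun n ↦ ⇑(T ^ n)) 1 fun n ↦
      (T ^ n).lipschitzWith_of_opNorm_le (by simpa using T.opNorm_pow_le_one hT1 n)
      ).equicontinuous.isClosed_setOfPred_tendsto continuous_const
  rw [ContinuousLinearMap.orthogonal_ker, hS.adjoint_eq, ← SetLike.mem_coe,
    Submodule.topologicalClosure_coe] at hx
  refine closure_minimal ?_ hclosed hx
  rintro _ ⟨v, rfl⟩
  exact hT.tendsto_pow_apply_one_sub_mul_self_apply hT1 v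

theorem IsSelfAdjoint.tendsto_pow_two_mul_apply (hT : IsSelfAdjoint T) (hT1 : ‖T‖ ≤ 1) (x : E) :
    Tendsto (fun k ↦ (T ^ (2 * k)) x) atTop (𝓝 ((1 - T * T).ker.starProjection x)) := by
  set K := (1 - T * T).ker
  set p := K.starProjection x
  have hp : ∀ k, (T ^ (2 * k)) p = p := fun k ↦ by
    have hfix : Function.IsFixedPt (T * T) p :=
      T.apply_apply_eq_of_mem_ker_one_sub_mul_self (K.starProjection_apply_mem x)
    rw [pow_mul, sq, FunLike.coe_pow_eq_iterate]
    exact hfix.iterate k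
  have h := (hT.tendsto_pow_apply_of_mem_orthogonal hT1
    (K.sub_starProjection_mem_orthogonal x)).comp
    (tendsto_atTop_mono (fun k ↦ Nat.le_mul_of_pos_left k two_pos) tendsto_id)
  rw [← add_zero p]
  exact (h.const_add p).congr fun k ↦ by rw [Function.comp_apply, map_sub, hp, add_sub_cancel]

theorem IsSelfAdjoint.tendsto_pow_two_mul_add_one_apply_sub (hT : IsSelfAdjoint T)
    (hT1 : ‖T‖ ≤ 1) (x : E) :
    Tendsto (fun k ↦ (T ^ (2 * k + 1)) x - (T ^ (2 * k + 2)) x) atTop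
      (𝓝 ((T - 1) ((1 - T * T).ker.starProjection x))) := by
  set p := (1 - T * T).ker.starProjection x
  have hp : T (T p) = p :=
    T.apply_apply_eq_of_mem_ker_one_sub_mul_self (Submodule.starProjection_apply_mem _ x)
  have hlimit : (T * (1 - T)) p = (T - 1) p := by
    simp only [mul_apply_eq_comp, sub_apply, one_apply_eq_self, map_sub, hp]
  rw [← hlimit]
  refine (((T * (1 - T)).continuous.tendsto _).comp
    (hT.tendsto_pow_two_mul_apply hT1 x)).congr fun k ↦ ?_
  rw [Function.comp_apply, show 2 * k + 2 = 2 * k + 1 + 1 from rfl, pow_succ' T (2 * k + 1),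
    pow_succ' T (2 * k)]
  simp only [mul_apply_eq_comp, sub_apply, one_apply_eq_self, map_sub]

theorem IsSelfAdjoint.opNorm_le_one_of_mul_self_add_mul_self_eq_one {N Z : E →L[𝕜] E}
    (hN : IsSelfAdjoint N) (hZ : IsSelfAdjoint Z) (h : N * N + Z * Z = 1) : ‖N‖ ≤ 1 := by
  refine N.opNorm_le_bound zero_le_one fun x ↦ ?_
  have hpyth : ‖N x‖ ^ 2 + ‖Z x‖ ^ 2 = ‖x‖ ^ 2 := by
    rw [N.apply_norm_sq_eq_inner_adjoint_right, Z.apply_norm_sq_eq_inner_adjoint_right,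
      hN.adjoint_eq, hZ.adjoint_eq, ← map_add, ← inner_add_right, ← add_apply, ← mul_def,
      ← mul_def, h, one_apply_eq_self, inner_self_eq_norm_sq]
  rw [one_mul, ← sq_le_sq₀ (norm_nonneg _) (norm_nonneg _)]
  nlinarith [sq_nonneg ‖Z x‖]

end SelfAdjointContraction

/-- For `h₀` with `P h₀ = 0` and `h_k := ∑_{i=0}^{k} (P∘R∘P∘R)^i h₀`,
with `N := P∘R∘P + Q∘R∘Q`, `Z := P∘R∘Q + Q∘R∘P` (`Q = I − P`) and `χ` the orthogonal
projection onto `ker Z`, the vectors `Q(R h_k) − Q(R(Q(R h_k)))` converge in norm to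
`(N − I)(χ h₀)` as `k → ∞`. -/
theorem stmt16 {H : Type*} [NormedAddCommGroup H] [InnerProductSpace ℂ H] [CompleteSpace H]
    (R P : H →L[ℂ] H)
    (hR : IsSelfAdjoint R) (hR2 : R ∘L R = 1)
    (hP : IsSelfAdjoint P) (hP2 : P ∘L P = P)
    (N Z : H →L[ℂ] H)
    (hN : N = P ∘L R ∘L P + ((1 : H →L[ℂ] H) - P) ∘L R ∘L ((1 : H →L[ℂ] H) - P))
    (hZ : Z = P ∘L R ∘L ((1 : H →L[ℂ] H) - P) + ((1 : H →L[ℂ] H) - P) ∘L R ∘L P)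
    (χ : H →L[ℂ] H) (hχ : IsSelfAdjoint χ) (hχ2 : χ ∘L χ = χ)
    (hχrange : LinearMap.range (χ : H →ₗ[ℂ] H) = LinearMap.ker (Z : H →ₗ[ℂ] H))
    (h₀ : H) (hh₀ : P h₀ = 0) :
    Tendsto
      (fun k : ℕ =>
        ((1 : H →L[ℂ] H) - P)
            (R (∑ i ∈ Finset.range (k + 1), ((P ∘L R ∘L P ∘L R) ^ i) h₀)) -
          ((1 : H →L[ℂ] H) - P)
            (R (((1 : H →L[ℂ] H) - P)
              (R (∑ i ∈ Finset.range (k + 1), ((P ∘L R ∘L P ∘L R) ^ i) h₀)))))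
      atTop (nhds ((N - 1) (χ h₀))) := by
  obtain rfl : N = blockDiag P R := hN
  obtain rfl : Z = blockOffDiag P R := hZ
  set N := blockDiag P R
  set Z := blockOffDiag P R
  have hPi : IsIdempotentElem P := hP2
  have hZZ : Z * Z = 1 - N * N := blockOffDiag_mul_self hPi hR2
  have hNsa : IsSelfAdjoint N := hP.blockDiag hR
  have hZsa : IsSelfAdjoint Z := hP.blockOffDiag hR
  have hN1 : ‖N‖ ≤ 1 :=
    hNsa.opNorm_le_one_of_mul_self_add_mul_self_eq_one hZsa (by rw [hZZ, add_sub_cancel])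
  have hχK : χ = (1 - N * N).ker.starProjection := by
    refine ContinuousLinearMap.IsStarProjection.ext ⟨hχ2, hχ⟩ isStarProjection_starProjection ?_
    rw [Submodule.range_starProjection, hχrange, ← hZZ, ← ker_adjoint_comp_self, hZsa.adjoint_eq,
      mul_def]
  have hQh₀ : (1 - P) h₀ = h₀ := by rw [sub_apply, one_apply_eq_self, hh₀, sub_zero]
  have hQRS : ∀ k : ℕ,
      (1 - P) (R (∑ i ∈ Finset.range (k + 1), ((P ∘L R ∘L P ∘L R) ^ i) h₀)) =
        (N ^ (2 * k + 1)) h₀ := fun k ↦ by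
    have h := congr($(one_sub_mul_mul_sum_pow_mul_one_sub hPi hR2 k) h₀)
    simp only [mul_apply_eq_comp, hQh₀, sum_apply] at h
    exact h
  have hQR : ∀ m : ℕ, (1 - P) (R ((N ^ m) h₀)) = (N ^ (m + 1)) h₀ := fun m ↦ by
    simpa only [mul_apply_eq_comp, hQh₀] using
      congr($(one_sub_mul_mul_blockDiag_pow_mul_one_sub (R := R) hPi m) h₀)
  rw [hχK]
  refine (hNsa.tendsto_pow_two_mul_add_one_apply_sub hN1 h₀).congr fun k ↦ ?_
  rw [hQRS, hQR]
end

section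
/- Let H be a complex Hilbert space, U : H → H a unitary continuous linear operator, P : H → H an orthogonal projection (P = P*, P∘P = P), and ε ∈ {1, −1}. If k ∈ H satisfies k = ε · P(U k), then U k = ε · k; in particular P k = k and (I − P)(U k) = 0. (For ε = −1 this is the uniqueness statement for the Marchenko-type tail equation K + π*RK = 0 for the pressure field; for ε = +1 it is the analogous uniqueness statement for the velocity field.) -/
/-!
Since `U` is isometric and `|ε| = 1`, `‖P (U k)‖ = ‖k‖ = ‖U k‖`; an orthogonal projection that
preserves the norm of a vector fixes it, so `k = ε • U k`, and `ε² = 1` turns this into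
`U k = ε • k`.
-/

open ContinuousLinearMap

section

variable {𝕜 E : Type*} [RCLike 𝕜] [NormedAddCommGroup E] [InnerProductSpace 𝕜 E]

theorem IsStarProjection.apply_eq_self_of_norm_apply_eq [CompleteSpace E] {p : E →L[𝕜] E}
    (hp : IsStarProjection p) {x : E} (hx : ‖p x‖ = ‖x‖) : p x = x := by
  obtain ⟨K, _, rfl⟩ := isStarProjection_iff_eq_starProjection.mp hp
  exact K.starProjection_eq_self_iff.mpr ((K.mem_iff_norm_starProjection x).mpr hx)

theorem IsStarProjection.apply_eq_self_of_eq_smul_apply_of_norm_map [CompleteSpace E]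
    {p U : E →L[𝕜] E} (hp : IsStarProjection p) (hU : ∀ x, ‖U x‖ = ‖x‖)
    {ε : 𝕜} (hε : ‖ε‖ = 1) {k : E} (hk : k = ε • p (U k)) : p (U k) = U k := by
  refine hp.apply_eq_self_of_norm_apply_eq ?_
  calc ‖p (U k)‖ = ‖ε • p (U k)‖ := by rw [norm_smul, hε, one_mul]
    _ = ‖U k‖ := by rw [← hk, hU]

end

theorem stmt17_general {H : Type*} [NormedAddCommGroup H] [InnerProductSpace ℂ H] [CompleteSpace H]
    (U : H →L[ℂ] H)
    (hU1 : ContinuousLinearMap.adjoint U ∘L U = 1)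
    (P : H →L[ℂ] H) (hP : IsSelfAdjoint P) (hP2 : P ∘L P = P)
    (ε : ℂ) (hε : ε = 1 ∨ ε = -1)
    (k : H) (hk : k = ε • P (U k)) :
    U k = ε • k ∧ P k = k ∧ ((1 : H →L[ℂ] H) - P) (U k) = 0 := by
  have hPU : P (U k) = U k := IsStarProjection.apply_eq_self_of_eq_smul_apply_of_norm_map
    ⟨hP2, hP⟩ ((norm_map_iff_adjoint_comp_self U).mpr hU1)
    (by rcases hε with rfl | rfl <;> simp) hk
  have hε2 : ε * ε = 1 := by rcases hε with rfl | rfl <;> norm_num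
  rw [hPU] at hk
  refine ⟨?_, ?_, ?_⟩
  · conv_rhs => rw [hk, smul_smul, hε2, one_smul]
  · conv_lhs => rw [hk, map_smul, hPU, ← hk]
  · simp [hPU]

/-- Let `U` be unitary on a complex Hilbert space `H`, `P` an
orthogonal projection, and `ε ∈ {1, −1}`. If `k = ε • P (U k)` then `U k = ε • k`;
in particular `P k = k` and `(I − P)(U k) = 0`. -/
theorem stmt17 {H : Type*} [NormedAddCommGroup H] [InnerProductSpace ℂ H] [CompleteSpace H]
    (U : H →L[ℂ] H)
    (hU1 : ContinuousLinearMap.adjoint U ∘L U = 1)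
    (hU2 : U ∘L ContinuousLinearMap.adjoint U = 1)
    (P : H →L[ℂ] H) (hP : IsSelfAdjoint P) (hP2 : P ∘L P = P)
    (ε : ℂ) (hε : ε = 1 ∨ ε = -1)
    (k : H) (hk : k = ε • P (U k)) :
    U k = ε • k ∧ P k = k ∧ ((1 : H →L[ℂ] H) - P) (U k) = 0 :=
  stmt17_general U hU1 P hP hP2 ε hε k hk
end

section
/- Let ε ∈ {1, −1}. The set of r₀ ∈ H with P r₀ = 0 for which the sequence of partial sums K_l := ∑_{j=0}^{l} (ε · P∘R)^j (P(R r₀)) converges in H as l → ∞ is dense in the kernel of P. (For ε = −1 this is the solvability-by-Neumann-series density statement for the generalized Marchenko equation K + π*RK = −π*R r₀; for ε = +1 it is the analogous statement for the velocity-field equation K − π*RK = −π*R r₀.) -/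
/-!
Write `F = P R (1 - P)` and `A = ε P R P`, a self-adjoint contraction. On the range of `P` the
operator `ε P R` acts as `A`, and `R² = 1` gives `P R (1 - P) R P = P - A²`; hence for
`r₀ = F* F F* v`, which lies in `ker P`, the Neumann series is `P` applied to
`∑ A ^ j (1 - A²)² v`. That series telescopes, and it converges because `A ^ n z - A ^ (n + 2) z → 0`
for every self-adjoint contraction: the norms `‖A ^ n z‖` decrease and the cross term
`⟪A ^ n z, A ^ (n + 2) z⟫` equals `‖A ^ (n + 1) z‖²`. Conversely, a vector of `ker P` orthogonal to
all such `r₀` is killed by `F`, hence by `P R`, so its own Neumann series vanishes: the good set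
has trivial orthogonal complement in `ker P`.
-/

open Filter Topology ContinuousLinearMap
open scoped InnerProduct

section NeumannSeries

variable {R M : Type*} [Semiring R] [TopologicalSpace M] [AddCommMonoid M] [Module R M]
  [ContinuousAdd M] [ContinuousConstSMul R M]

def neumannSeriesDomain (T : M →L[R] M) : Submodule R M where
  carrier := {x | ∃ K, Tendsto (fun l ↦ ∑ j ∈ Finset.range (l + 1), (T ^ j) x) atTop (𝓝 K)}
  add_mem' := by
    rintro x y ⟨K, hK⟩ ⟨L, hL⟩
    exact ⟨K + L, by simpa only [map_add, Finset.sum_add_distrib] using hK.add hL⟩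
  zero_mem' := ⟨0, by simpa only [map_zero, Finset.sum_const_zero] using tendsto_const_nhds⟩
  smul_mem' := by
    rintro c x ⟨K, hK⟩
    exact ⟨c • K, by simpa only [map_smul, Finset.smul_sum] using hK.const_smul c⟩

end NeumannSeries

theorem IsIdempotentElem.mul_mul_cross_eq_mul_one_sub_sq_sq {A : Type*} [Ring A] {p r : A}
    (hp : IsIdempotentElem p) (hr : r * r = 1) :
    p * r * ((1 - p) * r * p * (p * r * (1 - p)) * ((1 - p) * r * p)) =
      p * (1 - (p * r * p) ^ 2) ^ 2 := by
  have hp' : ∀ x, p * (p * x) = p * x := fun x ↦ by rw [← mul_assoc, hp.eq]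
  have hr' : ∀ x, r * (r * x) = x := fun x ↦ by rw [← mul_assoc, hr, one_mul]
  simp only [sq, mul_sub, sub_mul, mul_one, one_mul, mul_assoc, hp.eq, hp', hr']
  noncomm_ring

section InnerProductSpace

variable {𝕜 E F : Type*} [RCLike 𝕜] [NormedAddCommGroup E] [InnerProductSpace 𝕜 E]
  [CompleteSpace E] [NormedAddCommGroup F] [InnerProductSpace 𝕜 F] [CompleteSpace F]

theorem Submodule.topologicalClosure_eq_of_inf_orthogonal_eq_bot {K L : Submodule 𝕜 E}
    (hL : IsClosed (L : Set E)) (hKL : K ≤ L) (h : L ⊓ Kᗮ = ⊥) : K.topologicalClosure = L := by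
  have := sup_orthogonal_inf_of_hasOrthogonalProjection (K.topologicalClosure_minimal hKL hL)
  rwa [orthogonal_closure, inf_comm, h, sup_bot_eq] at this

theorem ContinuousLinearMap.orthogonal_range_adjoint_comp_self_comp_adjoint (T : E →L[𝕜] F) :
    (T† ∘L T ∘L T†).rangeᗮ = T.ker := by
  rw [orthogonal_range]
  refine le_antisymm (fun x hx ↦ ?_) fun x hx ↦ ?_
  · have : x ∈ ((T† ∘L T)† ∘L (T† ∘L T)).ker := by
      simpa [adjoint_comp] using congrArg (T†) hx
    rwa [ker_adjoint_comp_self, ker_adjoint_comp_self] at this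
  · simp_all [adjoint_comp]

theorem IsSelfAdjoint.tendsto_pow_apply_sub_pow_add_two_apply {A : E →L[𝕜] E}
    (hA : IsSelfAdjoint A) (hA1 : ‖A‖ ≤ 1) (z : E) :
    Tendsto (fun n ↦ (A ^ n) z - (A ^ (n + 2)) z) atTop (𝓝 0) := by
  set a : ℕ → ℝ := fun n ↦ ‖(A ^ n) z‖ ^ 2
  have hsucc : ∀ n, (A ^ (n + 1)) z = A ((A ^ n) z) := fun n ↦ by rw [pow_succ', mul_apply_eq_comp]
  have ha : Antitone a := antitone_nat_of_succ_le fun n ↦ by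
    simp only [a, hsucc]
    gcongr
    exact (le_opNorm A _).trans (mul_le_of_le_one_left (norm_nonneg _) hA1)
  obtain ⟨c, hc⟩ : ∃ c, Tendsto a atTop (𝓝 c) :=
    ⟨_, tendsto_atTop_ciInf ha ⟨0, by rintro _ ⟨n, rfl⟩; positivity⟩⟩
  have hcross : ∀ n, RCLike.re (inner 𝕜 ((A ^ n) z) ((A ^ (n + 2)) z)) = a (n + 1) := by
    intro n
    rw [hsucc (n + 1), ← adjoint_inner_left, hA.adjoint_eq, ← hsucc, inner_self_eq_norm_sq]
  have hsq : (fun n ↦ ‖(A ^ n) z - (A ^ (n + 2)) z‖ ^ 2) =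
      fun n ↦ a n - 2 * a (n + 1) + a (n + 2) :=
    funext fun n ↦ by rw [norm_sub_sq (𝕜 := 𝕜), hcross]
  have hlim : Tendsto (fun n ↦ ‖(A ^ n) z - (A ^ (n + 2)) z‖ ^ 2) atTop (𝓝 0) := by
    rw [hsq, show (0 : ℝ) = c - 2 * c + c by ring]
    exact (hc.sub ((hc.comp (tendsto_add_atTop_nat 1)).const_mul 2)).add
      (hc.comp (tendsto_add_atTop_nat 2))
  rw [tendsto_zero_iff_norm_tendsto_zero]
  simpa using hlim.sqrt

theorem IsSelfAdjoint.tendsto_sum_pow_apply_one_sub_sq_sq {A : E →L[𝕜] E}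
    (hA : IsSelfAdjoint A) (hA1 : ‖A‖ ≤ 1) (y : E) :
    Tendsto (fun l ↦ ∑ j ∈ Finset.range (l + 1), (A ^ j) (((1 - A ^ 2) ^ 2 : E →L[𝕜] E) y)) atTop
      (𝓝 ((1 - A ^ 2 : E →L[𝕜] E) ((1 + A) y))) := by
  have hsum : ∀ l, ∑ j ∈ Finset.range (l + 1), (A ^ j) (((1 - A ^ 2) ^ 2 : E →L[𝕜] E) y) =
      (1 - A ^ 2 : E →L[𝕜] E) ((1 + A) y) - ((A ^ (l + 1)) ((1 + A) y) - (A ^ (l + 1 + 2)) ((1 + A) y)) := by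
    intro l
    have : (∑ j ∈ Finset.range (l + 1), A ^ j) * (1 - A ^ 2) ^ 2 =
        (1 - A ^ 2) * (1 + A) - (A ^ (l + 1) - A ^ (l + 1 + 2)) * (1 + A) := by
      rw [show (1 - A ^ 2) ^ 2 = (1 - A) * ((1 - A ^ 2) * (1 + A)) by noncomm_ring,
        ← mul_assoc, geom_sum_mul_neg]
      noncomm_ring
    simpa only [sum_apply, mul_apply_eq_comp, sub_apply] using congrArg (· y) this
  simp only [hsum]
  simpa using tendsto_const_nhds.sub
    ((hA.tendsto_pow_apply_sub_pow_add_two_apply hA1 ((1 + A) y)).comp (tendsto_add_atTop_nat 1))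

theorem SemiconjBy.apply_mem_neumannSeriesDomain {T A P : E →L[𝕜] E} (hTA : SemiconjBy P A T)
    (hA : IsSelfAdjoint A) (hA1 : ‖A‖ ≤ 1) (y : E) :
    P (((1 - A ^ 2) ^ 2 : E →L[𝕜] E) y) ∈ neumannSeriesDomain T := by
  refine ⟨P ((1 - A ^ 2 : E →L[𝕜] E) ((1 + A) y)), ?_⟩
  have hpow : ∀ j x, (T ^ j) (P x) = P ((A ^ j) x) := fun j x ↦ by
    rw [← mul_apply_eq_comp, ← (hTA.pow_right j).eq, mul_apply_eq_comp]
  simpa only [hpow, ← map_sum, Function.comp_def] using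
    (P.continuous.tendsto _).comp (hA.tendsto_sum_pow_apply_one_sub_sq_sq hA1 y)


theorem IsStarProjection.norm_mul_mul_self_le_one {A : Type*} [NormedRing A] [StarRing A]
    [CStarRing A] {p u : A} (hp : IsStarProjection p) (hu : u ∈ unitary A) : ‖p * u * p‖ ≤ 1 :=
  calc ‖p * u * p‖ ≤ ‖p * u‖ * ‖p‖ := norm_mul_le _ _
    _ = ‖p‖ * ‖p‖ := by rw [CStarRing.norm_mul_mem_unitary _ hu]
    _ ≤ 1 := mul_le_one₀ (hp.norm_le p) (norm_nonneg _) (hp.norm_le p)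

theorem mem_neumannSeriesDomain_apply_adjoint_cross {R P : E →L[𝕜] E} (hR : IsSelfAdjoint R)
    (hR2 : R * R = 1) (hP : IsStarProjection P) {ε : 𝕜} (hε : ε = 1 ∨ ε = -1) (v : E) :
    (P ∘L R) (((P * R * (1 - P))† ∘L (P * R * (1 - P)) ∘L (P * R * (1 - P))†) v) ∈
      neumannSeriesDomain (ε • (P ∘L R)) := by
  set A := ε • (P * R * P)
  have hA : IsSelfAdjoint A := by
    refine .smul ?_ (by simpa [hP.isSelfAdjoint.star_eq] using hR.conjugate' P)
    rcases hε with rfl | rfl <;> simp [IsSelfAdjoint]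
  have hA1 : ‖A‖ ≤ 1 := by
    have hRu : R ∈ unitary (E →L[𝕜] E) := Unitary.mem_iff.mpr (by simp [hR.star_eq, hR2])
    rcases hε with rfl | rfl <;> simpa [A] using hP.norm_mul_mul_self_le_one hRu
  have hTA : SemiconjBy P A (ε • (P ∘L R)) := by
    rw [SemiconjBy, mul_smul_comm, smul_mul_assoc, ← mul_assoc, ← mul_assoc, hP.isIdempotentElem.eq]
    rfl
  have hF : (P * R * (1 - P))† = (1 - P) * R * P := by
    simp only [← star_eq_adjoint, star_mul, star_sub, star_one, hP.isSelfAdjoint.star_eq,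
      hR.star_eq, mul_assoc]
  have hPRM : P * R * ((P * R * (1 - P))† ∘L (P * R * (1 - P)) ∘L (P * R * (1 - P))†) =
      P * (1 - A ^ 2) ^ 2 := by
    have hε2 : ε ^ 2 = 1 := by rcases hε with rfl | rfl <;> norm_num
    rw [smul_pow, hε2, one_smul, ← mul_def, ← mul_def, hF]
    exact hP.isIdempotentElem.mul_mul_cross_eq_mul_one_sub_sq_sq hR2
  change (P * R * _) v ∈ _
  rw [hPRM, mul_apply_eq_comp]
  exact hTA.apply_mem_neumannSeriesDomain hA hA1 v

end InnerProductSpace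

/-- Let `ε ∈ {1, −1}`. The set of `r₀ ∈ H` with `P r₀ = 0` for which
the partial sums `K_l := ∑_{j=0}^{l} (ε • P∘R)^j (P (R r₀))` converge in `H` as `l → ∞`
is dense in the kernel of `P`. -/
theorem stmt18 {H : Type*} [NormedAddCommGroup H] [InnerProductSpace ℂ H] [CompleteSpace H]
    (R P : H →L[ℂ] H)
    (hR : IsSelfAdjoint R) (hR2 : R ∘L R = 1)
    (hP : IsSelfAdjoint P) (hP2 : P ∘L P = P)
    (ε : ℂ) (hε : ε = 1 ∨ ε = -1) :
    ∀ h : H, P h = 0 →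
      h ∈ closure {r₀ : H | P r₀ = 0 ∧
        ∃ K : H,
          Tendsto
            (fun l : ℕ => ∑ j ∈ Finset.range (l + 1), ((ε • (P ∘L R)) ^ j) (P (R r₀)))
            atTop (nhds K)} := by
  intro h hh
  set F := P * R * (1 - P)
  set G := P.ker ⊓ (neumannSeriesDomain (ε • (P ∘L R))).comap (P ∘L R : H →ₗ[ℂ] H)
  have hrange : (F† ∘L F ∘L F†).range ≤ G := by
    rintro _ ⟨v, rfl⟩
    refine ⟨?_, mem_neumannSeriesDomain_apply_adjoint_cross hR hR2 ⟨hP2, hP⟩ hε v⟩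
    change (P * F†) _ = 0
    simp [F, ← star_eq_adjoint, hP.star_eq, hR.star_eq, mul_sub, ← mul_assoc, mul_def P P, hP2]
  have hperp : P.ker ⊓ Gᗮ = ⊥ := by
    refine eq_bot_iff.mpr fun x ⟨(hPx : P x = 0), hxG⟩ ↦ ?_
    have hFx : F x = 0 := by
      change x ∈ F.ker
      rw [← orthogonal_range_adjoint_comp_self_comp_adjoint]
      exact Submodule.orthogonal_le hrange hxG
    have hxG' : x ∈ G := by
      refine ⟨hPx, ?_⟩
      change (P ∘L R) x ∈ neumannSeriesDomain (ε • (P ∘L R))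
      rw [show (P ∘L R) x = F x by simp [F, hPx], hFx]
      exact zero_mem _
    exact G.inf_orthogonal_eq_bot.le ⟨hxG', hxG⟩
  have hh' : h ∈ P.ker := hh
  rw [← Submodule.topologicalClosure_eq_of_inf_orthogonal_eq_bot (isClosed_ker P) inf_le_left hperp,
    ← SetLike.mem_coe, Submodule.topologicalClosure_coe] at hh'
  exact hh'
end
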